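/- arXiv:2111.07272 — 7 statements merged into one kernel-verified Lean document; each statement's English description precedes it below -/
import Mathlib

section
/- Let ℓ ∈ ℕ, k > 0, and 0 < r′ ≤ r, and define f(λ) = −(1/π) · λ²/((λ − ik)(λ + ik)) · j_ℓ(λ r′) h_ℓ(λ r) for λ ∈ ℂ ∖ {ik, −ik, 0}. Then the integral of f over the upper semicircle of radius ρ centered at the origin, i.e. ∫₀^π f(ρ e^{iθ}) · i ρ e^{iθ} dθ, tends to 0 as ρ → ∞. -/
open Complex MeasureTheory Set

/-- The Rayleigh derivative operator `D f = x ↦ f'(x)/x`. -/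
noncomputable def raylD (f : ℂ → ℂ) : ℂ → ℂ := fun x => deriv f x / x

/-- Spherical Bessel function `j_ℓ(x) = (-x)^ℓ Dˡ(sin x / x)`. -/
noncomputable def sphJ (l : ℕ) (x : ℂ) : ℂ :=
  (-x) ^ l * (raylD^[l] (fun y => Complex.sin y / y)) x

/-- Spherical Hankel function of the first kind `h_ℓ(x) = -i (-x)^ℓ Dˡ(e^{ix}/x)`. -/
noncomputable def sphH (l : ℕ) (x : ℂ) : ℂ :=
  -Complex.I * ((-x) ^ l * (raylD^[l] (fun y => Complex.exp (Complex.I * y) / y)) x)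

section Aux
open Polynomial

noncomputable def Pc (c : ℂ) : ℕ → Polynomial ℂ
  | 0 => Polynomial.X
  | (l+1) => c • (Polynomial.X * Pc c l) - Polynomial.X ^ 3 * (Pc c l).derivative

lemma Pc_coeff (c : ℂ) : ∀ l, ∀ m ≤ l, (Pc c l).coeff m = 0 := by
  intro l
  induction l with
  | zero => intro m hm; interval_cases m; simp [Pc]
  | succ n ih =>
    intro m hm
    have h1 : (Polynomial.X * Pc c n).coeff m = 0 := by
      rw [mul_comm, ← pow_one (Polynomial.X : Polynomial ℂ), Polynomial.coeff_mul_X_pow']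
      split_ifs with h
      · exact ih _ (by omega)
      · rfl
    have h2 : (Polynomial.X ^ 3 * (Pc c n).derivative).coeff m = 0 := by
      rw [mul_comm, Polynomial.coeff_mul_X_pow']
      split_ifs with h
      · rw [Polynomial.coeff_derivative, ih _ (by omega)]; simp
      · rfl
    simp [Pc, h1, h2]


lemma raylD_iter2 (a b c d : ℂ) (l : ℕ) : ∀ x : ℂ, x ≠ 0 →
    raylD^[l] (fun y => (a * Complex.exp (c*y) + b * Complex.exp (d*y))/y) x
    = a * Complex.exp (c*x) * (Pc c l).eval x⁻¹ + b * Complex.exp (d*x) * (Pc d l).eval x⁻¹ := by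
  induction l with
  | zero =>
    intro x hx
    simp only [Function.iterate_zero, id_eq, Pc, Polynomial.eval_X]
    field_simp
  | succ n ih =>
    intro x hx
    rw [Function.iterate_succ_apply']
    have hev : raylD^[n] (fun y => (a * Complex.exp (c*y) + b * Complex.exp (d*y))/y)
        =ᶠ[nhds x] (fun y => a * Complex.exp (c*y) * (Pc c n).eval y⁻¹
          + b * Complex.exp (d*y) * (Pc d n).eval y⁻¹) := by
      filter_upwards [IsOpen.mem_nhds isOpen_compl_singleton hx] with y hy
      exact ih y hy
    have hder : ∀ (e : ℂ), HasDerivAt (fun y : ℂ => e * Complex.exp (e*y) * (Pc e n).eval y⁻¹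
        + 0) 0 x → True := fun _ _ => trivial
    have key : ∀ (e : ℂ), HasDerivAt (fun y : ℂ => Complex.exp (e*y) * (Pc e n).eval y⁻¹)
        (e * Complex.exp (e*x) * (Pc e n).eval x⁻¹
          + Complex.exp (e*x) * ((Pc e n).derivative.eval x⁻¹ * (-(x^2)⁻¹))) x := by
      intro e
      have h1 : HasDerivAt (fun y : ℂ => Complex.exp (e*y)) (e * Complex.exp (e*x)) x := by
        have := ((hasDerivAt_id x).const_mul e).cexp
        simpa [mul_comm] using this
      have h2 : HasDerivAt (fun y : ℂ => (Pc e n).eval y⁻¹)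
          ((Pc e n).derivative.eval x⁻¹ * (-(x^2)⁻¹)) x :=
        ((Pc e n).hasDerivAt x⁻¹).comp x (hasDerivAt_inv hx)
      simpa [mul_comm, mul_assoc, mul_left_comm] using h1.fun_mul h2
    have hF : HasDerivAt (fun y : ℂ => a * Complex.exp (c*y) * (Pc c n).eval y⁻¹
          + b * Complex.exp (d*y) * (Pc d n).eval y⁻¹)
        (a * (c * Complex.exp (c*x) * (Pc c n).eval x⁻¹
          + Complex.exp (c*x) * ((Pc c n).derivative.eval x⁻¹ * (-(x^2)⁻¹)))
         + b * (d * Complex.exp (d*x) * (Pc d n).eval x⁻¹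
          + Complex.exp (d*x) * ((Pc d n).derivative.eval x⁻¹ * (-(x^2)⁻¹)))) x := by
      have := ((key c).const_mul a).fun_add ((key d).const_mul b)
      simpa [mul_assoc] using this
    have hd : deriv (raylD^[n] (fun y => (a * Complex.exp (c*y) + b * Complex.exp (d*y))/y)) x
        = _ := hev.deriv_eq.trans hF.deriv
    rw [raylD, hd]
    simp only [Pc, Polynomial.eval_sub, Polynomial.eval_smul, Polynomial.eval_mul,
      Polynomial.eval_pow, Polynomial.eval_X, smul_eq_mul]
    field_simp
    ring

lemma eval_inv_bound (p : Polynomial ℂ) (l : ℕ) (h : ∀ m ≤ l, p.coeff m = 0) :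
    ∃ C : ℝ, 0 ≤ C ∧ ∀ x : ℂ, 1 ≤ ‖x‖ → ‖p.eval x⁻¹‖ ≤ C / ‖x‖ ^ (l+1) := by
  refine ⟨∑ m ∈ Finset.range (p.natDegree + 1), ‖p.coeff m‖,
    Finset.sum_nonneg fun _ _ => norm_nonneg _, fun x hx => ?_⟩
  have hx0 : x ≠ 0 := by intro h0; simp [h0] at hx; linarith
  have hinv : ‖x⁻¹‖ ≤ 1 := by rw [norm_inv]; exact inv_le_one_of_one_le₀ hx
  have hinv0 : (0:ℝ) ≤ ‖x⁻¹‖ := norm_nonneg _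
  rw [Polynomial.eval_eq_sum_range]
  calc ‖∑ m ∈ Finset.range (p.natDegree + 1), p.coeff m * x⁻¹ ^ m‖
      ≤ ∑ m ∈ Finset.range (p.natDegree + 1), ‖p.coeff m * x⁻¹ ^ m‖ := norm_sum_le _ _
    _ ≤ ∑ m ∈ Finset.range (p.natDegree + 1), ‖p.coeff m‖ * ‖x⁻¹‖ ^ (l+1) := by
        apply Finset.sum_le_sum
        intro m _
        rw [norm_mul, norm_pow]
        rcases le_or_gt m l with hm | hm
        · rw [h m hm]; simp [pow_nonneg hinv0]
        · exact mul_le_mul_of_nonneg_left (pow_le_pow_of_le_one hinv0 hinv hm)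
            (norm_nonneg _)
    _ = (∑ m ∈ Finset.range (p.natDegree + 1), ‖p.coeff m‖) * ‖x⁻¹‖ ^ (l+1) := by
        rw [Finset.sum_mul]
    _ ≤ _ := by
        rw [norm_inv, inv_pow, ← div_eq_mul_inv]


lemma mul_div_pow_succ (A c : ℝ) (hA : A ≠ 0) (l : ℕ) : A^l * (c / A^(l+1)) = c / A := by
  rw [pow_succ, ← div_div]
  field_simp

open Complex in
lemma sphH_bound (l : ℕ) : ∃ C : ℝ, 0 ≤ C ∧ ∀ x : ℂ, 1 ≤ ‖x‖ →
    ‖sphH l x‖ ≤ C * Real.exp (-x.im) / ‖x‖ := by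
  obtain ⟨C, hC0, hC⟩ := eval_inv_bound (Pc I l) l (Pc_coeff I l)
  refine ⟨C, hC0, fun x hx => ?_⟩
  have hx0 : x ≠ 0 := by intro h0; simp [h0] at hx; linarith
  have hfun : (fun y : ℂ => Complex.exp (I * y) / y)
      = fun y => ((1:ℂ) * Complex.exp (I*y) + 0 * Complex.exp (I*y))/y := by
    funext y; ring
  have hrep := raylD_iter2 1 0 I I l x hx0
  have hA : (0:ℝ) < ‖x‖ := by linarith
  have hAl : (0:ℝ) < ‖x‖ ^ l := pow_pos hA l
  have : ‖sphH l x‖ = ‖x‖ ^ l * ‖Complex.exp (I*x) * (Pc I l).eval x⁻¹‖ := by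
    rw [sphH, hfun, hrep]
    simp [norm_mul, norm_pow, mul_assoc]
  rw [this, norm_mul]
  have he : ‖Complex.exp (I*x)‖ = Real.exp (-x.im) := by
    rw [Complex.norm_exp]; congr 1; simp
  rw [he]
  have hev := hC x hx
  calc ‖x‖ ^ l * (Real.exp (-x.im) * ‖(Pc I l).eval x⁻¹‖)
      ≤ ‖x‖ ^ l * (Real.exp (-x.im) * (C / ‖x‖ ^ (l+1))) := by
        gcongr
    _ = Real.exp (-x.im) * (‖x‖^l * (C / ‖x‖^(l+1))) := by ring
    _ = C * Real.exp (-x.im) / ‖x‖ := by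
        rw [mul_div_pow_succ _ _ (ne_of_gt hA)]; ring

open Complex in
lemma sphJ_bound (l : ℕ) : ∃ C : ℝ, 0 ≤ C ∧ ∀ x : ℂ, 1 ≤ ‖x‖ → 0 ≤ x.im →
    ‖sphJ l x‖ ≤ C * Real.exp x.im / ‖x‖ := by
  obtain ⟨C1, hC10, hC1⟩ := eval_inv_bound (Pc I l) l (Pc_coeff I l)
  obtain ⟨C2, hC20, hC2⟩ := eval_inv_bound (Pc (-I) l) l (Pc_coeff (-I) l)
  refine ⟨C1 + C2, by linarith, fun x hx him => ?_⟩
  have hx0 : x ≠ 0 := by intro h0; simp [h0] at hx; linarith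
  have hfun : (fun y : ℂ => Complex.sin y / y)
      = fun y => ((1/(2*I)) * Complex.exp (I*y) + (-(1/(2*I))) * Complex.exp ((-I)*y))/y := by
    funext y
    have h1 : I*y = y*I := mul_comm _ _
    have h2 : (-I)*y = -y*I := by ring
    have hnum : (Complex.exp (-y*I) - Complex.exp (y*I)) * I / 2
        = (1/(2*I)) * Complex.exp (y*I) + (-(1/(2*I))) * Complex.exp (-y*I) := by
      field_simp
      linear_combination (Complex.exp (-(y*I)) - Complex.exp (y*I)) * Complex.I_sq
    rw [Complex.sin, h1, h2, hnum]
  have hrep := raylD_iter2 (1/(2*I)) (-(1/(2*I))) I (-I) l x hx0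
  have hA : (0:ℝ) < ‖x‖ := by linarith
  have hAl : (0:ℝ) < ‖x‖ ^ l := pow_pos hA l
  have heq : ‖sphJ l x‖ = ‖x‖ ^ l *
      ‖(1/(2*I)) * Complex.exp (I*x) * (Pc I l).eval x⁻¹
        + (-(1/(2*I))) * Complex.exp ((-I)*x) * (Pc (-I) l).eval x⁻¹‖ := by
    rw [sphJ, hfun, hrep]
    simp [norm_mul, norm_pow]
  rw [heq]
  have he1 : ‖Complex.exp (I*x)‖ = Real.exp (-x.im) := by
    rw [Complex.norm_exp]; congr 1; simp
  have he2 : ‖Complex.exp ((-I)*x)‖ = Real.exp x.im := by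
    rw [Complex.norm_exp]; congr 1; simp
  have hhalf : ‖(1/(2*I) : ℂ)‖ = 1/2 := by
    simp
  have hexp1 : Real.exp (-x.im) ≤ 1 := Real.exp_le_one_iff.mpr (by linarith)
  have hexp2 : (1:ℝ) ≤ Real.exp x.im := Real.one_le_exp him
  have hexp2' : (0:ℝ) < Real.exp x.im := Real.exp_pos _
  calc ‖x‖ ^ l * ‖(1/(2*I)) * Complex.exp (I*x) * (Pc I l).eval x⁻¹
        + (-(1/(2*I))) * Complex.exp ((-I)*x) * (Pc (-I) l).eval x⁻¹‖
      ≤ ‖x‖ ^ l * (‖(1/(2*I) : ℂ)‖ * ‖Complex.exp (I*x)‖ * ‖(Pc I l).eval x⁻¹‖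
        + ‖(1/(2*I) : ℂ)‖ * ‖Complex.exp ((-I)*x)‖ * ‖(Pc (-I) l).eval x⁻¹‖) := by
        gcongr
        calc _ ≤ ‖(1/(2*I)) * Complex.exp (I*x) * (Pc I l).eval x⁻¹‖
            + ‖(-(1/(2*I))) * Complex.exp ((-I)*x) * (Pc (-I) l).eval x⁻¹‖ := norm_add_le _ _
          _ = _ := by simp [norm_mul]
    _ ≤ ‖x‖ ^ l * ((1/2) * 1 * (C1 / ‖x‖ ^ (l+1))
        + (1/2) * Real.exp x.im * (C2 / ‖x‖ ^ (l+1))) := by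
        rw [he1, he2, hhalf]
        gcongr
        · exact hC1 x hx
        · exact hC2 x hx
    _ = (1/2) * (‖x‖^l * (C1 / ‖x‖^(l+1))) + (1/2) * Real.exp x.im * (‖x‖^l * (C2 / ‖x‖^(l+1))) := by
        ring
    _ = ((1/2) * C1 + (1/2) * Real.exp x.im * C2) / ‖x‖ := by
        rw [mul_div_pow_succ _ _ (ne_of_gt hA), mul_div_pow_succ _ _ (ne_of_gt hA)]
        ring
    _ ≤ (C1 + C2) * Real.exp x.im / ‖x‖ := by
        gcongr ?_ / _
        nlinarith


end Aux

/-- the contribution of the upper semicircle of radius `ρ` to the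
contour integral of `f(λ) = −(1/π) λ²/((λ−ik)(λ+ik)) j_ℓ(λr′) h_ℓ(λr)` tends to
`0` as `ρ → ∞`, where `0 < r′ ≤ r`. -/
theorem stmt_4 (l : ℕ) (k r r' : ℝ) (hk : 0 < k) (hr' : 0 < r') (hrr : r' ≤ r)
    (f : ℂ → ℂ)
    (hf : ∀ lam : ℂ,
      f lam = -(1 / (Real.pi : ℂ)) * lam ^ 2 / ((lam - Complex.I * k) * (lam + Complex.I * k))
        * sphJ l (lam * r') * sphH l (lam * r)) :
    Filter.Tendsto
      (fun ρ : ℝ => ∫ θ in (0 : ℝ)..Real.pi,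
        f ((ρ : ℂ) * Complex.exp (Complex.I * θ))
          * (Complex.I * (ρ : ℂ) * Complex.exp (Complex.I * θ)))
      Filter.atTop (nhds 0) := by
  obtain ⟨CJ, hCJ0, hCJ⟩ := sphJ_bound l
  obtain ⟨CH, hCH0, hCH⟩ := sphH_bound l
  have hr : 0 < r := lt_of_lt_of_le hr' hrr
  have hπ : 0 < Real.pi := Real.pi_pos
  set C : ℝ := 4 * CJ * CH / (Real.pi * r * r') with hCdef
  have hC0 : 0 ≤ C := by positivity
  apply squeeze_zero_norm' (a := fun ρ : ℝ => C * Real.pi / ρ)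
  · filter_upwards [Filter.eventually_ge_atTop (max (2*k) (max (1/r') 1))] with ρ hρ
    have hρ1 : (1:ℝ) ≤ ρ := le_trans (le_max_right _ _) (le_trans (le_max_right _ _) hρ)
    have hρk : 2*k ≤ ρ := le_trans (le_max_left _ _) hρ
    have hρr' : 1/r' ≤ ρ := le_trans (le_max_left _ _) (le_trans (le_max_right _ _) hρ)
    have hρ0 : (0:ℝ) < ρ := by linarith
    have key : ∀ θ ∈ Set.uIoc (0:ℝ) Real.pi,
        ‖f ((ρ : ℂ) * Complex.exp (Complex.I * θ))
          * (Complex.I * (ρ : ℂ) * Complex.exp (Complex.I * θ))‖ ≤ C / ρ := by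
      intro θ hθ
      rw [Set.uIoc_of_le (le_of_lt hπ)] at hθ
      have hθ0 : 0 ≤ θ := le_of_lt hθ.1
      have hθπ : θ ≤ Real.pi := hθ.2
      set lam : ℂ := (ρ : ℂ) * Complex.exp (Complex.I * θ) with hlam
      have hIexp : Complex.I * (θ:ℂ) = (θ:ℂ) * Complex.I := mul_comm _ _
      have hnormexp : ‖Complex.exp (Complex.I * θ)‖ = 1 := by
        rw [Complex.norm_exp]
        simp [Complex.mul_re]
      have hnl : ‖lam‖ = ρ := by
        rw [hlam, norm_mul, hnormexp, Complex.norm_real, Real.norm_eq_abs,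
          abs_of_pos hρ0, mul_one]
      have him : lam.im = ρ * Real.sin θ := by
        rw [hlam, hIexp, Complex.mul_im]
        simp [Complex.exp_ofReal_mul_I_im]
      have him0 : 0 ≤ lam.im := by
        rw [him]
        exact mul_nonneg (le_of_lt hρ0) (Real.sin_nonneg_of_nonneg_of_le_pi hθ0 hθπ)
      -- norms of arguments
      have hnr' : ‖lam * (r':ℂ)‖ = ρ * r' := by
        rw [norm_mul, hnl, Complex.norm_real, Real.norm_eq_abs, abs_of_pos hr']
      have hnr : ‖lam * (r:ℂ)‖ = ρ * r := by
        rw [norm_mul, hnl, Complex.norm_real, Real.norm_eq_abs, abs_of_pos hr]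
      have h1r' : 1 ≤ ρ * r' := by
        have := (div_le_iff₀ hr').mp hρr'
        linarith [this]
      have h1r : 1 ≤ ρ * r := by nlinarith
      have himr' : (lam * (r':ℂ)).im = lam.im * r' := by
        rw [Complex.mul_im]; simp
      have himr : (lam * (r:ℂ)).im = lam.im * r := by
        rw [Complex.mul_im]; simp
      have hJ : ‖sphJ l (lam * r')‖ ≤ CJ * Real.exp (lam.im * r') / (ρ * r') := by
        have := hCJ (lam * r') (by rw [hnr']; exact h1r') (by rw [himr']; positivity)
        rwa [hnr', himr'] at this
      have hH : ‖sphH l (lam * r)‖ ≤ CH * Real.exp (-(lam.im * r)) / (ρ * r) := by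
        have := hCH (lam * r) (by rw [hnr]; exact h1r)
        rwa [hnr, himr] at this
      -- denominator bounds
      have hIk : ‖Complex.I * (k:ℂ)‖ = k := by
        rw [norm_mul, Complex.norm_I, Complex.norm_real, Real.norm_eq_abs,
          abs_of_pos hk, one_mul]
      have hd1 : ρ/2 ≤ ‖lam - Complex.I * k‖ := by
        have := norm_sub_norm_le lam (Complex.I * k)
        rw [hnl, hIk] at this
        linarith
      have hd2 : ρ/2 ≤ ‖lam + Complex.I * k‖ := by
        have h := norm_sub_norm_le lam (-(Complex.I * k))
        rw [hnl, norm_neg, hIk, sub_neg_eq_add] at h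
        linarith
      -- norm of whole integrand
      have hnorm_eq : ‖f lam * (Complex.I * (ρ:ℂ) * Complex.exp (Complex.I * θ))‖
          = (1/Real.pi) * ρ^2 / (‖lam - Complex.I * k‖ * ‖lam + Complex.I * k‖)
            * ‖sphJ l (lam * r')‖ * ‖sphH l (lam * r)‖ * ρ := by
        have hw : ‖Complex.I * (ρ:ℂ) * Complex.exp (Complex.I * θ)‖ = ρ := by
          rw [norm_mul, norm_mul, Complex.norm_I, hnormexp, Complex.norm_real,
            Real.norm_eq_abs, abs_of_pos hρ0]
          ring
        have hc : ‖(-(1 / (Real.pi:ℂ)))‖ = 1/Real.pi := by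
          rw [norm_neg, norm_div, norm_one, Complex.norm_real, Real.norm_eq_abs,
            abs_of_pos hπ]
        rw [hf lam, norm_mul, hw, norm_mul, norm_mul, norm_div, norm_mul, norm_mul,
          hc, norm_pow, hnl]
      rw [hnorm_eq]
      have hpos1 : (0:ℝ) < ρ/2 * (ρ/2) := by positivity
      calc (1/Real.pi) * ρ^2 / (‖lam - Complex.I * k‖ * ‖lam + Complex.I * k‖)
            * ‖sphJ l (lam * r')‖ * ‖sphH l (lam * r)‖ * ρ
          ≤ (1/Real.pi) * ρ^2 / (ρ/2 * (ρ/2))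
            * (CJ * Real.exp (lam.im * r') / (ρ * r'))
            * (CH * Real.exp (-(lam.im * r)) / (ρ * r)) * ρ := by
            gcongr
          _ = (4 * CJ * CH / (Real.pi * r * r'))
              * (Real.exp (lam.im * r') * Real.exp (-(lam.im * r))) / ρ := by
            field_simp
            ring
          _ ≤ (4 * CJ * CH / (Real.pi * r * r')) * 1 / ρ := by
            gcongr
            rw [← Real.exp_add]
            apply Real.exp_le_one_iff.mpr
            nlinarith
          _ = C / ρ := by rw [hCdef, mul_one]
    calc ‖∫ θ in (0:ℝ)..Real.pi, f ((ρ : ℂ) * Complex.exp (Complex.I * θ))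
          * (Complex.I * (ρ : ℂ) * Complex.exp (Complex.I * θ))‖
        ≤ C / ρ * |Real.pi - 0| := intervalIntegral.norm_integral_le_of_norm_le_const key
      _ = C * Real.pi / ρ := by
          rw [sub_zero, abs_of_pos hπ]; ring
  · exact tendsto_const_nhds.div_atTop Filter.tendsto_id
end

section
/- For every ℓ ∈ ℕ, k > 0 and r > 0, the complex numbers (−i)^ℓ j_ℓ(ikr) and i^{ℓ+2} h_ℓ(ikr) are positive real numbers. In particular j_ℓ(ikr) ≠ 0 and h_ℓ(ikr) ≠ 0, and j_ℓ(ikr) and h_ℓ(ikr) are both real when ℓ is even and both purely imaginary when ℓ is odd (i.e., they are simultaneously real or simultaneously purely imaginary). -/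
open Complex MeasureTheory Set

noncomputable def ddc (l n : ℕ) : ℝ :=
  (Nat.factorial (n + l)) / (Nat.factorial n * Nat.factorial (2*n + 2*l + 1))

lemma ddc_pos (l n : ℕ) : 0 < ddc l n := by
  unfold ddc
  positivity

lemma ddc_le (l n : ℕ) : ddc l n ≤ 1 / Nat.factorial n := by
  unfold ddc
  rw [div_le_div_iff₀ (by positivity) (by positivity)]
  have h : (Nat.factorial (n+l) : ℝ) ≤ Nat.factorial (2*n+2*l+1) := by
    exact_mod_cast Nat.factorial_le (by omega)
  nlinarith [Nat.factorial_pos n, (Nat.cast_pos (α := ℝ)).2 (Nat.factorial_pos n)]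

lemma ddc_succ (l n : ℕ) : ((n:ℝ)+1) * ddc l (n+1) = ddc (l+1) n := by
  unfold ddc
  have h1 : n + 1 + l = n + (l+1) := by omega
  have h2 : 2*(n+1) + 2*l + 1 = 2*n + 2*(l+1) + 1 := by omega
  rw [h1, h2, Nat.factorial_succ n]
  have := Nat.factorial_pos n
  have := Nat.factorial_pos (2*n + 2*(l+1) + 1)
  field_simp
  push_cast
  ring

lemma summable_ddc (l : ℕ) (x : ℝ) (hx : 0 ≤ x) : Summable (fun n => ddc l n * x ^ n) := by
  apply Summable.of_nonneg_of_le (fun n => mul_nonneg (ddc_pos l n).le (pow_nonneg hx n))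
    (fun n => ?_) (Real.summable_pow_div_factorial x)
  calc ddc l n * x ^ n ≤ (1 / Nat.factorial n) * x ^ n :=
        mul_le_mul_of_nonneg_right (ddc_le l n) (pow_nonneg hx n)
    _ = x ^ n / Nat.factorial n := by ring

noncomputable def cc (l : ℕ) (z : ℂ) : ℂ := ∑' n : ℕ, (-1)^n * (ddc l n : ℂ) * z ^ n

lemma summable_cc (l : ℕ) (z : ℂ) : Summable (fun n : ℕ => (-1:ℂ)^n * (ddc l n : ℂ) * z ^ n) := by
  apply Summable.of_norm
  have : (fun n : ℕ => ‖(-1:ℂ)^n * (ddc l n : ℂ) * z ^ n‖) = fun n => ddc l n * ‖z‖ ^ n := by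
    funext n
    rw [norm_mul, norm_mul, norm_pow, norm_pow, norm_neg, norm_one, one_pow, one_mul,
      Complex.norm_real, Real.norm_eq_abs, abs_of_pos (ddc_pos l n)]
  rw [this]
  exact summable_ddc l ‖z‖ (norm_nonneg z)

lemma hasDerivAt_cc (l : ℕ) (z : ℂ) : HasDerivAt (cc l) (-cc (l+1) z) z := by
  set R : ℝ := ‖z‖ + 1 with hR
  have hR1 : (1:ℝ) ≤ R := by rw [hR]; linarith [norm_nonneg z]
  have hRz : ‖z‖ < R := by simp [hR]
  set u : ℕ → ℝ := fun n => ddc (l+1) (n-1) * R ^ n with hu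
  have hu_sum : Summable u := by
    rw [← summable_nat_add_iff 1]
    apply Summable.of_nonneg_of_le
      (fun n => mul_nonneg (ddc_pos _ _).le (pow_nonneg (by linarith) _))
      (fun n => ?_) ((summable_ddc (l+1) R (by linarith)).mul_left R)
    simp only [hu, Nat.add_sub_cancel]
    rw [pow_succ]
    exact le_of_eq (by ring)
  set g : ℕ → ℂ → ℂ := fun n y => (-1)^n * (ddc l n : ℂ) * y ^ n with hg
  set g' : ℕ → ℂ → ℂ := fun n y => (-1)^n * (ddc l n : ℂ) * (n * y ^ (n-1)) with hg'
  have hgderiv : ∀ n y, HasDerivAt (g n) (g' n y) y := by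
    intro n y
    simpa [hg, hg', mul_assoc] using ((hasDerivAt_pow n y).const_mul ((-1:ℂ)^n * (ddc l n : ℂ)))
  have hbound : ∀ n y, y ∈ Metric.ball (0:ℂ) R → ‖g' n y‖ ≤ u n := by
    intro n y hy
    simp only [Metric.mem_ball, dist_zero_right] at hy
    simp only [hg', hu, norm_mul, norm_pow, norm_neg, norm_one, one_pow, one_mul,
      Complex.norm_real, Real.norm_eq_abs, abs_of_pos (ddc_pos l n), Complex.norm_natCast]
    rcases n with _ | m
    · have h00 : (0:ℝ) ≤ ddc (l+1) 0 * R ^ 0 := mul_nonneg (ddc_pos _ _).le (by positivity)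
      simpa using h00
    · simp only [Nat.add_sub_cancel]
      calc ddc l (m+1) * ((m+1 : ℕ) * ‖y‖ ^ m)
          = ((m:ℝ)+1) * ddc l (m+1) * ‖y‖ ^ m := by push_cast; ring
        _ = ddc (l+1) m * ‖y‖ ^ m := by rw [ddc_succ]
        _ ≤ ddc (l+1) m * R ^ (m+1) := by
            apply mul_le_mul_of_nonneg_left _ (ddc_pos _ _).le
            calc ‖y‖ ^ m ≤ R ^ m := by
                  apply pow_le_pow_left₀ (norm_nonneg y) hy.le
              _ ≤ R ^ (m+1) := by
                  apply pow_le_pow_right₀ (by linarith) (by omega)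
  have hmem : z ∈ Metric.ball (0:ℂ) R := by simpa [Metric.mem_ball, Complex.dist_eq] using hRz
  have hmain : HasDerivAt (fun y => ∑' n, g n y) (∑' n, g' n z) z :=
    hasDerivAt_tsum_of_isPreconnected hu_sum Metric.isOpen_ball
      ((convex_ball (0:ℂ) R).isPreconnected)
      (fun n y _ => hgderiv n y) hbound hmem (summable_cc l z) hmem
  have hsum' : Summable (fun n => g' n z) :=
    Summable.of_norm_bounded hu_sum (fun n => hbound n z hmem)
  have heq : ∑' n, g' n z = -cc (l+1) z := by
    rw [Summable.tsum_eq_zero_add hsum']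
    have h0 : g' 0 z = 0 := by simp [hg']
    rw [h0, zero_add]
    rw [show -cc (l+1) z = ∑' n : ℕ, -((-1:ℂ)^n * (ddc (l+1) n : ℂ) * z ^ n) from
      (by rw [tsum_neg]; rfl)]
    congr 1
    funext n
    simp only [hg', Nat.add_sub_cancel, pow_succ]
    have : ((ddc l (n+1) : ℝ) : ℂ) * ((n:ℂ)+1) = (ddc (l+1) n : ℂ) := by
      rw [← Complex.ofReal_natCast]
      push_cast
      rw [mul_comm]
      exact_mod_cast congrArg Complex.ofReal (ddc_succ l n)
    push_cast
    rw [← this]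
    ring
  rw [← heq]
  exact hmain

lemma cc_zero_eq (y : ℂ) (hy : y ≠ 0) : cc 0 (y^2) = Complex.sin y / y := by
  rw [eq_div_iff hy]
  have h1 : cc 0 (y^2) * y = ∑' n : ℕ, ((-1:ℂ)^n * (ddc 0 n : ℂ) * (y^2) ^ n) * y := by
    unfold cc
    exact tsum_mul_right.symm
  rw [h1, Complex.sin_eq_tsum]
  congr 1
  funext n
  have hd0 : ddc 0 n = 1 / ((2*n+1).factorial : ℝ) := by
    unfold ddc
    rw [show n + 0 = n from rfl, show 2*n + 2*0 + 1 = 2*n+1 from by omega]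
    rw [div_eq_div_iff (by positivity) (by positivity)]
    ring
  have hd : (ddc 0 n : ℂ) = 1 / ((2*n+1).factorial : ℂ) := by
    rw [hd0]; push_cast; ring
  rw [hd, ← pow_mul]
  push_cast
  ring

lemma key_j (l : ℕ) : ∀ x : ℂ, x ≠ 0 →
    (raylD^[l] (fun y => Complex.sin y / y)) x = (-2)^l * cc l (x^2) := by
  induction l with
  | zero => intro x hx; simpa using (cc_zero_eq x hx).symm
  | succ l ih =>
    intro x hx
    rw [Function.iterate_succ_apply']
    show deriv (raylD^[l] fun y => Complex.sin y / y) x / x = _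
    have hev : (raylD^[l] fun y => Complex.sin y / y) =ᶠ[nhds x]
        (fun y => (-2)^l * cc l (y^2)) := by
      filter_upwards [IsOpen.mem_nhds isOpen_compl_singleton hx] with y hy
      exact ih y hy
    rw [hev.deriv_eq]
    have hder : HasDerivAt (fun y : ℂ => (-2:ℂ)^l * cc l (y^2))
        ((-2)^l * (-cc (l+1) (x^2) * (2*x))) x := by
      have h1 : HasDerivAt (fun y : ℂ => cc l (y^2)) (-cc (l+1) (x^2) * (2*x)) x := by
        have := (hasDerivAt_cc l (x^2)).comp x (by simpa using hasDerivAt_pow 2 x)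
        simpa [pow_one, Function.comp_def] using this
      simpa [mul_assoc] using h1.const_mul ((-2:ℂ)^l)
    rw [hder.deriv]
    field_simp
    ring

lemma cc_neg_sq (l : ℕ) (t : ℝ) (ht : 0 < t) :
    ∃ C : ℝ, 0 < C ∧ cc l (-((t:ℂ)^2)) = (C : ℂ) := by
  refine ⟨∑' n : ℕ, ddc l n * (t^2) ^ n, ?_, ?_⟩
  · have hsum : Summable (fun n : ℕ => ddc l n * (t^2)^n) := summable_ddc l (t^2) (by positivity)
    apply Summable.tsum_pos hsum (fun n => mul_nonneg (ddc_pos l n).le (by positivity)) 0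
    have := ddc_pos l 0
    simpa using this
  · unfold cc
    rw [Complex.ofReal_tsum]
    congr 1
    funext n
    have h2 : ((-1:ℂ))^n * ((-1:ℂ))^n = 1 := by rw [← mul_pow]; norm_num
    have key : ((-1:ℂ))^n * (ddc l n : ℂ) * ((-1:ℂ) * (t:ℂ)^2)^n
        = (ddc l n:ℂ) * ((t:ℂ)^2)^n := by
      rw [mul_pow]
      linear_combination ((ddc l n:ℂ) * (((t:ℂ)^2)^n)) * h2
    rw [show -((t:ℂ)^2) = (-1) * (t:ℂ)^2 from by ring, key]
    push_cast
    ring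

lemma jpart (l : ℕ) (t : ℝ) (ht : 0 < t) :
    ∃ C : ℝ, 0 < C ∧ sphJ l (Complex.I * t) = Complex.I ^ l * ((2*t)^l * C : ℝ) := by
  obtain ⟨C, hC, hCeq⟩ := cc_neg_sq l t ht
  refine ⟨C, hC, ?_⟩
  have hne : (Complex.I * t : ℂ) ≠ 0 :=
    mul_ne_zero Complex.I_ne_zero (by exact_mod_cast ne_of_gt ht)
  unfold sphJ
  rw [key_j l _ hne]
  have hsq : (Complex.I * (t:ℂ))^2 = -((t:ℂ)^2) := by
    rw [mul_pow, Complex.I_sq]; ring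
  rw [hsq, hCeq]
  push_cast
  rw [show (-(Complex.I * (t:ℂ)))^l = (-Complex.I)^l * (t:ℂ)^l from by rw [← neg_mul, mul_pow]]
  rw [show (-Complex.I)^l = (-1)^l * Complex.I^l from by rw [← neg_one_mul, mul_pow]]
  rw [mul_pow]
  have h2 : ((-2:ℂ))^l * (-1)^l = 2^l := by rw [← mul_pow]; norm_num
  linear_combination (Complex.I^l * (t:ℂ)^l * (C:ℂ)) * h2

lemma key_h (l : ℕ) : ∃ a : ℕ → ℝ, a 0 = 1 ∧ (∀ m, 0 ≤ a m) ∧ (∀ m, l < m → a m = 0) ∧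
    ∀ x : ℂ, x ≠ 0 → (raylD^[l] (fun y => Complex.exp (Complex.I * y) / y)) x
      = Complex.exp (Complex.I * x) *
        ∑ m ∈ Finset.range (l+1), (a m : ℂ) * Complex.I ^ (l+m) * x ^ (-(l+1+m : ℤ)) := by
  induction l with
  | zero =>
    refine ⟨fun m => if m = 0 then 1 else 0, by simp, ?_, ?_, ?_⟩
    · intro m; dsimp only; split <;> norm_num
    · intro m hm; dsimp only; rw [if_neg (by omega)]
    · intro x hx
      simp only [Function.iterate_zero_apply, Finset.sum_range_one]
      norm_num
      exact div_eq_mul_inv _ _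
  | succ l ih =>
    obtain ⟨a, ha0, hann, havan, haeq⟩ := ih
    set b : ℕ → ℝ := fun m => if m = 0 then 0 else (l+m) * a (m-1) with hb
    refine ⟨fun m => a m + b m, ?_, ?_, ?_, ?_⟩
    · simp [hb, ha0]
    · intro m
      have h1 := hann m
      have h2 := hann (m-1)
      simp only [hb]
      split
      · linarith
      · have h3 : (0:ℝ) ≤ ((l:ℝ)+(m:ℝ)) * a (m-1) := mul_nonneg (by positivity) h2
        linarith
    · intro m hm
      simp only [hb]
      rw [if_neg (by omega : ¬(m = 0)), havan m (by omega), havan (m-1) (by omega)]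
      ring
    · intro x hx
      rw [Function.iterate_succ_apply']
      show deriv (raylD^[l] fun y => Complex.exp (Complex.I * y) / y) x / x = _
      have hev : (raylD^[l] fun y => Complex.exp (Complex.I * y) / y) =ᶠ[nhds x]
          (fun y => Complex.exp (Complex.I * y) *
            ∑ m ∈ Finset.range (l+1), (a m : ℂ) * Complex.I ^ (l+m) * y ^ (-(l+1+m : ℤ))) := by
        filter_upwards [IsOpen.mem_nhds isOpen_compl_singleton hx] with y hy
        exact haeq y hy
      rw [hev.deriv_eq]
      have h1 : HasDerivAt (fun y : ℂ => Complex.exp (Complex.I * y))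
          (Complex.exp (Complex.I * x) * Complex.I) x := by
        have h0 : HasDerivAt (fun y : ℂ => Complex.I * y) Complex.I x := by
          simpa using (hasDerivAt_id x).const_mul Complex.I
        have hcomp := (Complex.hasDerivAt_exp (Complex.I * x)).comp x h0
        simpa [Function.comp_def] using hcomp
      have h2 : HasDerivAt (fun y : ℂ =>
            ∑ m ∈ Finset.range (l+1), (a m : ℂ) * Complex.I ^ (l+m) * y ^ (-(l+1+m : ℤ)))
          (∑ m ∈ Finset.range (l+1), (a m : ℂ) * Complex.I ^ (l+m) *
            ((-(l+1+m : ℤ)) * x ^ (-(l+1+m : ℤ) - 1))) x := by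
        apply HasDerivAt.fun_sum
        intro m _
        simpa [mul_assoc] using
          (hasDerivAt_zpow (-(l+1+m : ℤ)) x (Or.inl hx)).const_mul
            ((a m : ℂ) * Complex.I ^ (l+m))
      have hF := h1.fun_mul h2
      rw [hF.deriv]
      rw [div_eq_iff hx]
      dsimp only
      have hx1 : ∀ m : ℕ, x ^ (-(l+1+1+m : ℤ)) * x = x ^ (-(l+1+m : ℤ)) := by
        intro m
        rw [← zpow_add_one₀ hx]
        congr 1
        push_cast
        ring
      have hsum : (∑ m ∈ Finset.range (l+1+1),
            ((a m + b m : ℝ) : ℂ) * Complex.I ^ (l+1+m) * x ^ (-(l+1+1+m : ℤ))) * x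
          = Complex.I * (∑ m ∈ Finset.range (l+1),
              (a m : ℂ) * Complex.I ^ (l+m) * x ^ (-(l+1+m : ℤ)))
            + ∑ m ∈ Finset.range (l+1), (a m : ℂ) * Complex.I ^ (l+m) *
                ((-(l+1+m : ℤ)) * x ^ (-(l+1+m : ℤ) - 1)) := by
        rw [Finset.sum_mul]
        have hterm : ∀ m : ℕ,
            ((a m + b m : ℝ) : ℂ) * Complex.I ^ (l+1+m) * x ^ (-(l+1+1+m : ℤ)) * x
            = (a m : ℂ) * Complex.I ^ (l+1+m) * x ^ (-(l+1+m : ℤ))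
              + (b m : ℂ) * Complex.I ^ (l+1+m) * x ^ (-(l+1+m : ℤ)) := by
          intro m
          rw [mul_assoc _ _ x, hx1 m]
          push_cast
          ring
        rw [Finset.sum_congr rfl (fun m _ => hterm m), Finset.sum_add_distrib]
        congr 1
        · rw [Finset.sum_range_succ, havan (l+1) (by omega)]
          rw [Finset.mul_sum]
          simp only [Complex.ofReal_zero, zero_mul, add_zero]
          apply Finset.sum_congr rfl
          intro m _
          rw [show l+1+m = (l+m)+1 from by omega, pow_succ]
          ring
        · rw [Finset.sum_range_succ']
          have hb0 : ((b 0 : ℝ) : ℂ) = 0 := by simp only [hb]; norm_num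
          rw [hb0, zero_mul, zero_mul, add_zero]
          apply Finset.sum_congr rfl
          intro i _
          have hbv : (b (i+1) : ℝ) = (l+1+i) * a i := by
            simp only [hb]
            rw [if_neg (by omega : ¬(i+1 = 0)), Nat.add_sub_cancel]
            push_cast
            ring
          rw [hbv]
          rw [show l+1+(i+1) = (l+i)+2 from by omega, pow_add, Complex.I_sq]
          have he : (-((l:ℤ) + 1 + ((i+1 : ℕ) : ℤ))) = (-((l:ℤ) + 1 + (i:ℤ)) - 1) := by
            push_cast; ring
          rw [he]
          push_cast
          ring
      push_cast at hsum ⊢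
      linear_combination (-(Complex.exp (Complex.I * x))) * hsum

lemma hpart (l : ℕ) (t : ℝ) (ht : 0 < t) :
    ∃ C : ℝ, 0 < C ∧ sphH l (Complex.I * t) = (-Complex.I)^(l+2) * (C : ℂ) := by
  obtain ⟨a, ha0, hann, havan, haeq⟩ := key_h l
  set S : ℝ := ∑ m ∈ Finset.range (l+1), a m * t ^ (-(l+1+m : ℤ)) with hS
  have hSpos : 0 < S := by
    rw [hS]
    have hle : a 0 * t ^ (-(l+1+0 : ℤ)) ≤ S := by
      rw [hS]
      exact Finset.single_le_sum (f := fun m => a m * t ^ (-(l+1+m : ℤ)))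
        (fun m _ => mul_nonneg (hann m) (le_of_lt (zpow_pos ht _)))
        (by simp : (0:ℕ) ∈ Finset.range (l+1))
    have h0 : 0 < a 0 * t ^ (-(l+1+0 : ℤ)) := by
      rw [ha0, one_mul]; exact zpow_pos ht _
    rw [hS] at hle
    linarith
  refine ⟨t^l * Real.exp (-t) * S, by positivity, ?_⟩
  have htne : ((t:ℂ)) ≠ 0 := by exact_mod_cast ht.ne'
  have hne : (Complex.I * t : ℂ) ≠ 0 := mul_ne_zero Complex.I_ne_zero htne
  unfold sphH
  rw [haeq _ hne]
  have hexp : Complex.exp (Complex.I * (Complex.I * t)) = ((Real.exp (-t) : ℝ) : ℂ) := by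
    rw [show Complex.I * (Complex.I * (t:ℂ)) = ((-t : ℝ) : ℂ) from by
      rw [← mul_assoc, Complex.I_mul_I]; push_cast; ring]
    exact (Complex.ofReal_exp _).symm
  have hterm : ∀ m : ℕ, (a m : ℂ) * Complex.I ^ (l+m) * (Complex.I * (t:ℂ)) ^ (-(l+1+m : ℤ))
      = -Complex.I * ((a m * t ^ (-(l+1+m : ℤ)) : ℝ) : ℂ) := by
    intro m
    calc (a m : ℂ) * Complex.I ^ (l+m) * (Complex.I * (t:ℂ)) ^ (-(l+1+m : ℤ))
        = (a m : ℂ) * (Complex.I ^ (((l+m:ℕ)):ℤ) * Complex.I ^ (-(l+1+m : ℤ))) *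
            ((t:ℂ)) ^ (-(l+1+m : ℤ)) := by
          rw [mul_zpow, zpow_natCast]; ring
      _ = (a m : ℂ) * Complex.I ^ ((((l+m:ℕ)):ℤ) + (-(l+1+m : ℤ))) * ((t:ℂ)) ^ (-(l+1+m : ℤ)) := by
          rw [zpow_add₀ Complex.I_ne_zero]
      _ = -Complex.I * ((a m * t ^ (-(l+1+m : ℤ)) : ℝ) : ℂ) := by
          rw [show (((l+m:ℕ)):ℤ) + (-(l+1+m : ℤ)) = -1 from by push_cast; ring]
          rw [zpow_neg_one, Complex.inv_I, Complex.ofReal_mul, Complex.ofReal_zpow]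
          ring
  rw [Finset.sum_congr rfl (fun m _ => hterm m), ← Finset.mul_sum, hexp]
  rw [show (∑ m ∈ Finset.range (l+1), ((a m * t ^ (-(l+1+m : ℤ)) : ℝ) : ℂ)) = ((S : ℝ) : ℂ) from by
    rw [hS]; push_cast; rfl]
  rw [show (-(Complex.I * (t:ℂ)))^l = (-Complex.I)^l * ((t:ℂ))^l from by
    rw [← neg_mul, mul_pow]]
  rw [show ((-Complex.I : ℂ))^(l+2) = (-Complex.I)^l * (-1) from by
    rw [pow_add]; norm_num [pow_two, Complex.I_mul_I]]
  push_cast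
  linear_combination (Complex.I^l * (t:ℂ)^l * Complex.exp (-(t:ℂ)) * (S:ℂ) * (-1:ℂ)^l) *
    Complex.I_sq

lemma im_I_pow_mul (l : ℕ) (c : ℝ) (hl : Even l) : (Complex.I ^ l * (c:ℂ)).im = 0 := by
  obtain ⟨m, rfl⟩ := hl
  rw [show m + m = 2*m from by ring, pow_mul, Complex.I_sq]
  rw [show ((-1:ℂ))^m = (((-1:ℝ)^m : ℝ) : ℂ) from by push_cast; ring]
  rw [← Complex.ofReal_mul]
  exact Complex.ofReal_im _

lemma re_I_pow_mul (l : ℕ) (c : ℝ) (hl : Odd l) : (Complex.I ^ l * (c:ℂ)).re = 0 := by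
  obtain ⟨m, rfl⟩ := hl
  rw [pow_add, pow_mul, Complex.I_sq, pow_one]
  rw [show ((-1:ℂ))^m = (((-1:ℝ)^m : ℝ) : ℂ) from by push_cast; ring]
  rw [show (((-1:ℝ)^m : ℝ) : ℂ) * Complex.I * (c:ℂ)
      = ((((-1:ℝ)^m * c : ℝ)) : ℂ) * Complex.I from by push_cast; ring]
  rw [Complex.mul_I_re, Complex.ofReal_im, neg_zero]

/-- `(−i)^ℓ j_ℓ(ikr)` and `i^{ℓ+2} h_ℓ(ikr)` are positive real numbers;
in particular `j_ℓ(ikr) ≠ 0`, `h_ℓ(ikr) ≠ 0`, and both values are real for even `ℓ`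
and purely imaginary for odd `ℓ`. -/
theorem stmt_5 (l : ℕ) (k r : ℝ) (hk : 0 < k) (hr : 0 < r) :
    (∃ cj : ℝ, 0 < cj ∧ (-Complex.I) ^ l * sphJ l (Complex.I * k * r) = (cj : ℂ)) ∧
    (∃ ch : ℝ, 0 < ch ∧ Complex.I ^ (l + 2) * sphH l (Complex.I * k * r) = (ch : ℂ)) ∧
    sphJ l (Complex.I * k * r) ≠ 0 ∧ sphH l (Complex.I * k * r) ≠ 0 ∧
    (Even l → (sphJ l (Complex.I * k * r)).im = 0 ∧ (sphH l (Complex.I * k * r)).im = 0) ∧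
    (Odd l → (sphJ l (Complex.I * k * r)).re = 0 ∧ (sphH l (Complex.I * k * r)).re = 0) := by
  have ht : 0 < k * r := mul_pos hk hr
  have hpt : Complex.I * (k:ℂ) * (r:ℂ) = Complex.I * ((k*r : ℝ) : ℂ) := by
    push_cast; ring
  rw [hpt]
  set t : ℝ := k * r with htdef
  obtain ⟨Cj, hCj, hJeq⟩ := jpart l t ht
  obtain ⟨Ch, hCh, hHeq⟩ := hpart l t ht
  have hHeq' : sphH l (Complex.I * t) = Complex.I ^ l * (((-1:ℝ)^(l+1) * Ch : ℝ) : ℂ) := by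
    rw [hHeq]
    rw [show ((-Complex.I : ℂ))^(l+2) = (-1:ℂ)^(l+2) * Complex.I^(l+2) from by
      rw [← neg_one_mul, mul_pow]]
    rw [pow_add, pow_add, Complex.I_sq]
    push_cast
    ring
  refine ⟨⟨(2*t)^l * Cj, by positivity, ?_⟩, ⟨Ch, hCh, ?_⟩, ?_, ?_, ?_, ?_⟩
  · rw [hJeq, ← mul_assoc, ← mul_pow]
    norm_num [Complex.I_mul_I]
  · rw [hHeq, ← mul_assoc, ← mul_pow]
    norm_num [Complex.I_mul_I]
  · rw [hJeq]
    apply mul_ne_zero (pow_ne_zero _ Complex.I_ne_zero)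
    have : ((2*t)^l * Cj : ℝ) ≠ 0 := by positivity
    exact_mod_cast this
  · rw [hHeq']
    apply mul_ne_zero (pow_ne_zero _ Complex.I_ne_zero)
    have : ((-1:ℝ)^(l+1) * Ch : ℝ) ≠ 0 := by
      apply mul_ne_zero _ hCh.ne'
      positivity
    exact_mod_cast this
  · intro hl
    exact ⟨by rw [hJeq]; exact im_I_pow_mul l _ hl, by rw [hHeq']; exact im_I_pow_mul l _ hl⟩
  · intro hl
    exact ⟨by rw [hJeq]; exact re_I_pow_mul l _ hl, by rw [hHeq']; exact re_I_pow_mul l _ hl⟩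
end

section
/- Let ℓ ∈ ℕ, k > 0, R₀ > 0, and let A, B be real numbers such that B h_ℓ(ikR₀) − ik A h_ℓ′(ikR₀) ≠ 0. Then the complex number t = (ik A j_ℓ′(ikR₀) − B j_ℓ(ikR₀)) / (B h_ℓ(ikR₀) − ik A h_ℓ′(ikR₀)) is real. (Consequently, the t-matrix t_ℓ(z), defined for negative energy z = −k² by matching the logarithmic derivative of a real-valued radial solution χ with χ(R₀) = A, χ′(R₀) = B, is a real number.) -/
open Complex MeasureTheory Set

local notation "cc" => (starRingEnd ℂ)

lemma hasDerivAt_conj_conj {f : ℂ → ℂ} {f' x : ℂ} (hf : HasDerivAt f f' (cc x)) :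
    HasDerivAt (fun y => cc (f (cc y))) (cc f') x := by
  rw [hasDerivAt_iff_tendsto_slope] at hf ⊢
  have h1 : Filter.Tendsto cc (nhdsWithin x {x}ᶜ) (nhdsWithin (cc x) {cc x}ᶜ) := by
    apply Filter.Tendsto.inf
    · exact Complex.continuous_conj.tendsto x
    · refine Filter.tendsto_principal_principal.2 fun y hy => ?_
      simp only [Set.mem_compl_iff, Set.mem_singleton_iff] at *
      exact fun h => hy (by simpa using congrArg cc h)
  have h2 := (Complex.continuous_conj.tendsto f').comp (hf.comp h1)
  refine h2.congr fun y => ?_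
  simp only [Function.comp_apply, slope_def_field]
  rw [map_div₀, map_sub, map_sub]
  simp

lemma differentiableAt_conj_conj {f : ℂ → ℂ} {x : ℂ}
    (h : DifferentiableAt ℂ (fun y => cc (f (cc y))) x) : DifferentiableAt ℂ f (cc x) := by
  have h' : HasDerivAt (fun y => cc (f (cc y)))
      (deriv (fun y => cc (f (cc y))) x) (cc (cc x)) := by
    simpa using h.hasDerivAt
  have := hasDerivAt_conj_conj h'
  have hfe : (fun y => cc ((fun y => cc (f (cc y))) (cc y))) = f := by
    funext y; simp
  rw [hfe] at this
  exact this.differentiableAt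

lemma deriv_conj_conj' (f : ℂ → ℂ) (x : ℂ) :
    deriv (fun y => cc (f (cc y))) x = cc (deriv f (cc x)) := by
  by_cases h : DifferentiableAt ℂ f (cc x)
  · exact (hasDerivAt_conj_conj h.hasDerivAt).deriv
  · rw [deriv_zero_of_not_differentiableAt h, map_zero,
      deriv_zero_of_not_differentiableAt]
    exact fun hd => h (differentiableAt_conj_conj hd)

lemma raylD_conj (f : ℂ → ℂ) :
    raylD (fun y => cc (f (cc y))) = fun x => cc (raylD f (cc x)) := by
  funext x
  simp only [raylD, deriv_conj_conj', map_div₀, Complex.conj_conj]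

lemma raylD_iter_conj (l : ℕ) (f : ℂ → ℂ) :
    raylD^[l] (fun y => cc (f (cc y))) = fun x => cc ((raylD^[l] f) (cc x)) := by
  induction l generalizing f with
  | zero => rfl
  | succ n ih =>
    rw [Function.iterate_succ_apply, raylD_conj, ih, Function.iterate_succ_apply]

lemma raylD_neg_arg (f : ℂ → ℂ) :
    raylD (fun y => f (-y)) = fun x => raylD f (-x) := by
  funext x
  simp only [raylD, deriv_comp_neg]
  rw [div_neg, neg_div]

lemma raylD_iter_neg_arg (l : ℕ) (f : ℂ → ℂ) :
    raylD^[l] (fun y => f (-y)) = fun x => (raylD^[l] f) (-x) := by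
  induction l generalizing f with
  | zero => rfl
  | succ n ih =>
    rw [Function.iterate_succ_apply, raylD_neg_arg, ih, Function.iterate_succ_apply]

lemma raylD_neg_fun (f : ℂ → ℂ) :
    raylD (fun y => -f y) = fun x => -raylD f x := by
  funext x
  simp only [raylD, deriv.fun_neg, neg_div]

lemma raylD_iter_neg_fun (l : ℕ) (f : ℂ → ℂ) :
    raylD^[l] (fun y => -f y) = fun x => -(raylD^[l] f) x := by
  induction l generalizing f with
  | zero => rfl
  | succ n ih =>
    rw [Function.iterate_succ_apply, raylD_neg_fun, ih, Function.iterate_succ_apply]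

lemma sphJ_symm (l : ℕ) (x : ℂ) : cc (sphJ l (-(cc x))) = (-1) ^ l * sphJ l x := by
  set s : ℂ → ℂ := fun y => Complex.sin y / y with hs
  have hconj : (fun y => cc (s (cc y))) = s := by
    funext y
    simp [hs, map_div₀, ← Complex.sin_conj]
  have h1 : (fun x => cc ((raylD^[l] s) (cc x))) = raylD^[l] s := by
    rw [← raylD_iter_conj, hconj]
  have hneg : (fun y => s (-y)) = s := by
    funext y
    simp [hs, Complex.sin_neg, neg_div_neg_eq]
  have h2 : (fun x => (raylD^[l] s) (-x)) = raylD^[l] s := by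
    rw [← raylD_iter_neg_arg, hneg]
  have e1 : cc ((raylD^[l] s) (-(cc x))) = (raylD^[l] s) x := by
    have : (raylD^[l] s) (-(cc x)) = (raylD^[l] s) (cc x) := congrFun h2 (cc x)
    rw [this, congrFun h1 x]
  simp only [sphJ, map_mul, map_pow, map_neg, Complex.conj_conj, neg_neg, ← hs, e1]
  ring_nf
  rw [show ((-1:ℂ)) ^ (l*2) = 1 by rw [mul_comm l 2, pow_mul]; norm_num, mul_one]
lemma sphH_symm (l : ℕ) (x : ℂ) : cc (sphH l (-(cc x))) = (-1) ^ l * sphH l x := by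
  set g : ℂ → ℂ := fun y => Complex.exp (Complex.I * y) / y with hg
  set gb : ℂ → ℂ := fun y => Complex.exp (-(Complex.I * y)) / y with hgb
  have hconj : (fun y => cc (g (cc y))) = gb := by
    funext y
    simp only [hg, hgb, map_div₀, ← Complex.exp_conj, map_mul, Complex.conj_I,
      Complex.conj_conj, neg_mul]
  have h1 : (fun x => cc ((raylD^[l] g) (cc x))) = raylD^[l] gb := by
    rw [← raylD_iter_conj, hconj]
  have hneg : (fun y => gb (-y)) = fun y => -g y := by
    funext y
    simp only [hg, hgb, mul_neg, neg_neg, div_neg, neg_div]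
  have h2 : (fun x => (raylD^[l] gb) (-x)) = fun x => -(raylD^[l] g) x := by
    rw [← raylD_iter_neg_arg, hneg, raylD_iter_neg_fun]
  have e1 : cc ((raylD^[l] g) (-(cc x))) = -(raylD^[l] g) x := by
    have a1 : cc ((raylD^[l] g) (cc (-x))) = (raylD^[l] gb) (-x) := congrFun h1 (-x)
    rw [map_neg] at a1
    rw [a1, congrFun h2 x]
  simp only [sphH, map_mul, map_pow, map_neg, Complex.conj_conj, Complex.conj_I, neg_neg, ← hg, e1]
  ring_nf
  rw [show ((-1:ℂ)) ^ (l*2) = 1 by rw [mul_comm l 2, pow_mul]; norm_num, mul_one]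

lemma sphJ_deriv_symm (l : ℕ) (x : ℂ) :
    cc (deriv (sphJ l) (-(cc x))) = (-1) ^ (l + 1) * deriv (sphJ l) x := by
  have hfun : sphJ l = fun y => (-1 : ℂ) ^ l * cc (sphJ l (-(cc y))) := by
    funext y
    rw [sphJ_symm, ← mul_assoc, ← mul_pow]
    norm_num
  have hd : deriv (sphJ l) x = (-1 : ℂ) ^ l * deriv (fun y => cc (sphJ l (-(cc y)))) x := by
    conv_lhs => rw [hfun]
    rw [deriv_const_mul_field]
  have hder : deriv (fun y => cc (sphJ l (-(cc y)))) x = -cc (deriv (sphJ l) (-(cc x))) := by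
    rw [deriv_conj_conj' (fun z => sphJ l (-z)), deriv_comp_neg, map_neg]
  rw [hder] at hd
  rw [pow_succ]
  have hsq : ((-1 : ℂ)) ^ l * (-1) ^ l = 1 := by
    rw [← mul_pow]; norm_num
  linear_combination (-1 : ℂ) ^ l * hd - cc (deriv (sphJ l) (-(cc x))) * hsq

lemma sphH_deriv_symm (l : ℕ) (x : ℂ) :
    cc (deriv (sphH l) (-(cc x))) = (-1) ^ (l + 1) * deriv (sphH l) x := by
  have hfun : sphH l = fun y => (-1 : ℂ) ^ l * cc (sphH l (-(cc y))) := by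
    funext y
    rw [sphH_symm, ← mul_assoc, ← mul_pow]
    norm_num
  have hd : deriv (sphH l) x = (-1 : ℂ) ^ l * deriv (fun y => cc (sphH l (-(cc y)))) x := by
    conv_lhs => rw [hfun]
    rw [deriv_const_mul_field]
  have hder : deriv (fun y => cc (sphH l (-(cc y)))) x = -cc (deriv (sphH l) (-(cc x))) := by
    rw [deriv_conj_conj' (fun z => sphH l (-z)), deriv_comp_neg, map_neg]
  rw [hder] at hd
  rw [pow_succ]
  have hsq : ((-1 : ℂ)) ^ l * (-1) ^ l = 1 := by
    rw [← mul_pow]; norm_num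
  linear_combination (-1 : ℂ) ^ l * hd - cc (deriv (sphH l) (-(cc x))) * hsq

/-- for real `A`, `B`, the matching expression
`t = (ik A j_ℓ′(ikR₀) − B j_ℓ(ikR₀)) / (B h_ℓ(ikR₀) − ik A h_ℓ′(ikR₀))`
(with nonzero denominator) is a real number. -/
theorem stmt_6 (l : ℕ) (k R₀ : ℝ) (hk : 0 < k) (hR₀ : 0 < R₀) (A B : ℝ)
    (hden : (B : ℂ) * sphH l (Complex.I * k * R₀)
      - Complex.I * k * A * deriv (sphH l) (Complex.I * k * R₀) ≠ 0) :
    ((Complex.I * k * A * deriv (sphJ l) (Complex.I * k * R₀)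
        - (B : ℂ) * sphJ l (Complex.I * k * R₀))
      / ((B : ℂ) * sphH l (Complex.I * k * R₀)
        - Complex.I * k * A * deriv (sphH l) (Complex.I * k * R₀))).im = 0 := by
  set x : ℂ := Complex.I * k * R₀ with hxdef
  have hx : -(cc x) = x := by
    simp [hxdef, map_mul, Complex.conj_I, Complex.conj_ofReal]
  have hJ : cc (sphJ l x) = (-1) ^ l * sphJ l x := by
    conv_lhs => rw [← hx]
    exact sphJ_symm l x
  have hH : cc (sphH l x) = (-1) ^ l * sphH l x := by
    conv_lhs => rw [← hx]
    exact sphH_symm l x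
  have hJ' : cc (deriv (sphJ l) x) = (-1) ^ (l + 1) * deriv (sphJ l) x := by
    conv_lhs => rw [← hx]
    exact sphJ_deriv_symm l x
  have hH' : cc (deriv (sphH l) x) = (-1) ^ (l + 1) * deriv (sphH l) x := by
    conv_lhs => rw [← hx]
    exact sphH_deriv_symm l x
  rw [← Complex.conj_eq_iff_im]
  have hN : cc (Complex.I * k * A * deriv (sphJ l) x - (B : ℂ) * sphJ l x)
      = (-1) ^ l * (Complex.I * k * A * deriv (sphJ l) x - (B : ℂ) * sphJ l x) := by
    simp only [map_sub, map_mul, Complex.conj_I, Complex.conj_ofReal, hJ, hJ', pow_succ]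
    ring
  have hM : cc ((B : ℂ) * sphH l x - Complex.I * k * A * deriv (sphH l) x)
      = (-1) ^ l * ((B : ℂ) * sphH l x - Complex.I * k * A * deriv (sphH l) x) := by
    simp only [map_sub, map_mul, Complex.conj_I, Complex.conj_ofReal, hH, hH', pow_succ]
    ring
  rw [map_div₀, hN, hM, mul_div_mul_left _ _ (pow_ne_zero l (by norm_num : (-1:ℂ) ≠ 0))]
end

section
/- For every k > 0 and every pair of real numbers 0 < d̲ < d̄, there exist positive constants C₁ and C₂, independent of ℓ, such that for every integer ℓ ≥ 1 and every r ∈ [d̲, d̄]: C₁ |h_ℓ(ikr)| ≤ |h_{ℓ+1}(ikr)| ≤ C₂ ℓ |h_ℓ(ikr)|. -/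
open Complex MeasureTheory Set

/-- Coefficients of the polynomial part of the spherical Hankel function. -/
private def aa : ℕ → ℕ → ℝ
  | 0, 0 => 1
  | 0, _+1 => 0
  | l+1, 0 => aa l 0
  | l+1, m+1 => aa l (m+1) + 2*(l+m+1) * aa l m

private lemma aa_nonneg : ∀ l m, 0 ≤ aa l m := by
  intro l
  induction l with
  | zero => intro m; cases m <;> simp [aa]
  | succ l ih =>
    intro m
    cases m with
    | zero => simpa [aa] using ih 0
    | succ m =>
      have h1 := ih (m+1); have h2 := ih m
      simp only [aa]
      positivity

private lemma aa_zero (l : ℕ) : aa l 0 = 1 := by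
  induction l with
  | zero => rfl
  | succ l ih => simpa [aa] using ih

private lemma aa_eq_zero : ∀ l m, l < m → aa l m = 0 := by
  intro l
  induction l with
  | zero => intro m hm; cases m; · omega
            simp [aa]
  | succ l ih =>
    intro m hm
    cases m with
    | zero => omega
    | succ m =>
      have h1 : aa l (m+1) = 0 := ih (m+1) (by omega)
      have h2 : aa l m = 0 := ih m (by omega)
      simp [aa, h1, h2]

/-- Polynomial part of the spherical Hankel function. -/
private noncomputable def sphSum (l : ℕ) (x : ℂ) : ℂ :=
  ∑ m ∈ Finset.range (l+1), (aa l m : ℂ) * (Complex.I/2)^m * (x ^ (l+1+m))⁻¹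

private lemma key (l : ℕ) (x : ℂ) (hx : x ≠ 0) :
    Complex.I * x * sphSum (l+1) x
    = Complex.I * sphSum l x
      + ∑ m ∈ Finset.range (l+1), (aa l m : ℂ) * (Complex.I/2)^m *
          ((-(l+1+m:ℤ) : ℂ) * (x^(l+2+m))⁻¹) := by
  unfold sphSum
  rw [Finset.mul_sum, Finset.mul_sum, ← Finset.sum_add_distrib,
    Finset.sum_range_succ' _ (l+1)]
  have hsplit : ∀ m ∈ Finset.range (l+1),
      Complex.I * x * ((aa (l+1) (m+1) : ℂ) * (Complex.I/2)^(m+1) * (x^(l+1+1+(m+1)))⁻¹)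
        = Complex.I * x * ((aa l (m+1) : ℂ) * (Complex.I/2)^(m+1) * (x^(l+1+1+(m+1)))⁻¹)
          + (aa l m : ℂ) * (Complex.I/2)^m * ((-(l+1+m:ℤ) : ℂ) * (x^(l+2+m))⁻¹) := by
    intro m hm
    have haa : (aa (l+1) (m+1) : ℂ) = (aa l (m+1) : ℂ) + 2*(l+m+1) * (aa l m : ℂ) := by
      push_cast [aa]; ring
    rw [haa]
    have hIm : (Complex.I/2)^(m+1) = (Complex.I/2)^m * (Complex.I/2) := pow_succ _ _
    have hxp : (x:ℂ)^(l+1+1+(m+1)) = x^(l+2+m) * x := by ring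
    rw [hIm, hxp]
    have hx2 : x^(l+2+m) ≠ 0 := pow_ne_zero _ hx
    push_cast
    field_simp
    ring_nf
    simp [Complex.I_sq]
    ring
  rw [Finset.sum_congr rfl hsplit, Finset.sum_add_distrib]
  have hA : (∑ m ∈ Finset.range (l+1),
      Complex.I * x * ((aa l (m+1) : ℂ) * (Complex.I/2)^(m+1) * (x^(l+1+1+(m+1)))⁻¹))
      + Complex.I * x * ((aa (l+1) 0 : ℂ) * (Complex.I/2)^0 * (x^(l+1+1+0))⁻¹)
      = ∑ m ∈ Finset.range (l+1),
          Complex.I * ((aa l m : ℂ) * (Complex.I/2)^m * (x^(l+1+m))⁻¹) := by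
    rw [Finset.sum_range_succ]
    have hz : aa l (l+1) = 0 := aa_eq_zero l (l+1) (by omega)
    rw [hz]
    rw [Finset.sum_range_succ'
      (fun m => Complex.I * ((aa l m : ℂ) * (Complex.I/2)^m * (x^(l+1+m))⁻¹)) l]
    simp only [Complex.ofReal_zero, zero_mul, mul_zero, zero_add, add_zero]
    congr 1
    · apply Finset.sum_congr rfl
      intro m hm
      have hxp : (x:ℂ)^(l+1+1+(m+1)) = x^(l+1+(m+1)) * x := by ring
      rw [hxp]
      have hx2 : x^(l+1+(m+1)) ≠ 0 := pow_ne_zero _ hx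
      field_simp
    · have h0 : aa (l+1) 0 = aa l 0 := rfl
      rw [h0]
      have hxp : (x:ℂ)^(l+1+1+0) = x^(l+1+0) * x := by ring
      rw [hxp]
      have hx2 : x^(l+1+0) ≠ 0 := pow_ne_zero _ hx
      field_simp
  rw [Finset.sum_add_distrib, ← hA]
  ring

private lemma hasDsum (l : ℕ) (x : ℂ) (hx : x ≠ 0) :
    HasDerivAt (fun y => sphSum l y)
      (∑ m ∈ Finset.range (l+1), (aa l m : ℂ) * (Complex.I/2)^m *
        ((-(l+1+m:ℤ) : ℂ) * (x^(l+2+m))⁻¹)) x := by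
  unfold sphSum
  apply HasDerivAt.fun_sum
  intro m _
  have h1 : HasDerivAt (fun y : ℂ => y ^ (-(l+1+m:ℕ) : ℤ))
      (((-(l+1+m:ℕ) : ℤ) : ℂ) * x ^ ((-(l+1+m:ℕ) : ℤ) - 1)) x :=
    hasDerivAt_zpow _ x (Or.inl hx)
  have hfun : (fun y : ℂ => y ^ (-(l+1+m:ℕ) : ℤ)) = fun y : ℂ => (y ^ (l+1+m))⁻¹ := by
    funext y; rw [zpow_neg, zpow_natCast]
  have hval : x ^ ((-(l+1+m:ℕ) : ℤ) - 1) = (x ^ (l+2+m))⁻¹ := by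
    rw [show (-(l+1+m:ℕ) : ℤ) - 1 = -((l+2+m : ℕ) : ℤ) by push_cast; ring,
      zpow_neg, zpow_natCast]
  rw [hfun, hval] at h1
  have h2 := h1.const_mul ((aa l m : ℂ) * (Complex.I/2)^m)
  convert h2 using 1
  · rfl
  push_cast
  ring

private lemma hasDexp (x : ℂ) :
    HasDerivAt (fun y => Complex.exp (Complex.I * y))
      (Complex.exp (Complex.I * x) * Complex.I) x := by
  have := ((hasDerivAt_id x).const_mul Complex.I).cexp
  simpa using this

private lemma raylD_iter (l : ℕ) : ∀ x : ℂ, x ≠ 0 →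
    raylD^[l] (fun y => Complex.exp (Complex.I * y) / y) x
      = Complex.I ^ l * (Complex.exp (Complex.I * x) * sphSum l x) := by
  induction l with
  | zero =>
    intro x hx
    simp only [Function.iterate_zero, id_eq, pow_zero, one_mul, sphSum]
    simp [div_eq_mul_inv, aa]
  | succ l ih =>
    intro x hx
    rw [Function.iterate_succ_apply']
    have hev : raylD^[l] (fun y => Complex.exp (Complex.I * y) / y)
        =ᶠ[nhds x] fun y => Complex.I ^ l * (Complex.exp (Complex.I * y) * sphSum l y) := by
      filter_upwards [eventually_ne_nhds hx] with y hy
      exact ih y hy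
    have hd : HasDerivAt (fun y => Complex.I ^ l * (Complex.exp (Complex.I * y) * sphSum l y))
        (Complex.I ^ l * (Complex.exp (Complex.I * x) * Complex.I * sphSum l x
          + Complex.exp (Complex.I * x) *
            ∑ m ∈ Finset.range (l+1), (aa l m : ℂ) * (Complex.I/2)^m *
              ((-(l+1+m:ℤ) : ℂ) * (x^(l+2+m))⁻¹))) x :=
      ((hasDexp x).mul (hasDsum l x hx)).const_mul (Complex.I ^ l)
    have hderiv : deriv (raylD^[l] (fun y => Complex.exp (Complex.I * y) / y)) x
        = Complex.I ^ l * (Complex.exp (Complex.I * x) * Complex.I * sphSum l x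
          + Complex.exp (Complex.I * x) *
            ∑ m ∈ Finset.range (l+1), (aa l m : ℂ) * (Complex.I/2)^m *
              ((-(l+1+m:ℤ) : ℂ) * (x^(l+2+m))⁻¹)) := by
      rw [hev.deriv_eq]; exact hd.deriv
    simp only [raylD]
    rw [hderiv, div_eq_iff hx]
    have hk := key l x hx
    set D := ∑ m ∈ Finset.range (l+1), (aa l m : ℂ) * (Complex.I/2)^m *
        ((-(l+1+m:ℤ) : ℂ) * (x^(l+2+m))⁻¹) with hD
    have hD2 : D = Complex.I * x * sphSum (l+1) x - Complex.I * sphSum l x := by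
      linear_combination -hk
    rw [hD2]; ring

/-- Real-valued part of the Hankel function on the imaginary axis. -/
private noncomputable def TT (l : ℕ) (s : ℝ) : ℝ :=
  ∑ m ∈ Finset.range (l+1), aa l m * (2^m * s^(m+1))⁻¹

private lemma sphH_eval (l : ℕ) (s : ℝ) (hs : 0 < s) :
    sphH l (Complex.I * s) = (-1:ℂ)^(l+1) * Complex.I^l * ((Real.exp (-s) * TT l s : ℝ) : ℂ) := by
  have hx : (Complex.I * s : ℂ) ≠ 0 := by
    simp [Complex.ext_iff, hs.ne']
  have hsne : (s:ℂ) ≠ 0 := (Complex.ofReal_ne_zero).2 hs.ne'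
  rw [sphH, raylD_iter l _ hx]
  have hexp : Complex.exp (Complex.I * (Complex.I * s)) = ((Real.exp (-s) : ℝ) : ℂ) := by
    rw [show Complex.I * (Complex.I * s) = ((-s : ℝ) : ℂ) by
      push_cast; ring_nf; simp [Complex.I_sq]]
    exact (Complex.ofReal_exp _).symm
  rw [hexp, sphSum, TT]
  push_cast
  simp only [Finset.mul_sum]
  apply Finset.sum_congr rfl
  intro m _
  field_simp
  ring
  rw [mul_assoc _ ((1/2:ℂ)^m) (2^m), ← mul_pow]; norm_num

private lemma TT_pos (l : ℕ) (s : ℝ) (hs : 0 < s) : 0 < TT l s := by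
  unfold TT
  apply Finset.sum_pos'
  · intro m _
    have := aa_nonneg l m
    positivity
  · refine ⟨0, Finset.mem_range.2 (by omega), ?_⟩
    rw [aa_zero]
    positivity

private lemma TT_succ (l : ℕ) (s : ℝ) (hs : 0 < s) :
    TT (l+1) s = TT l s
      + s⁻¹ * ∑ m ∈ Finset.range (l+1), ((l:ℝ)+m+1) * (aa l m * (2^m * s^(m+1))⁻¹) := by
  have hsne : s ≠ 0 := hs.ne'
  unfold TT
  rw [Finset.sum_range_succ' _ (l+1)]
  have hsplit : ∀ m ∈ Finset.range (l+1),
      aa (l+1) (m+1) * (2^(m+1) * s^(m+1+1))⁻¹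
        = aa l (m+1) * (2^(m+1) * s^(m+1+1))⁻¹
          + s⁻¹ * (((l:ℝ)+m+1) * (aa l m * (2^m * s^(m+1))⁻¹)) := by
    intro m hm
    have haa : aa (l+1) (m+1) = aa l (m+1) + 2*(l+m+1) * aa l m := rfl
    rw [haa]
    field_simp
    ring
  rw [Finset.sum_congr rfl hsplit, Finset.sum_add_distrib]
  have hA : (∑ m ∈ Finset.range (l+1), aa l (m+1) * (2^(m+1) * s^(m+1+1))⁻¹)
      + aa (l+1) 0 * (2^0 * s^(0+1))⁻¹
      = ∑ m ∈ Finset.range (l+2), aa l m * (2^m * s^(m+1))⁻¹ := by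
    rw [Finset.sum_range_succ' (fun m => aa l m * (2^m * s^(m+1))⁻¹) (l+1)]
    have h0 : aa (l+1) 0 = aa l 0 := rfl
    rw [h0]
  have hB : ∑ m ∈ Finset.range (l+2), aa l m * (2^m * s^(m+1))⁻¹
      = ∑ m ∈ Finset.range (l+1), aa l m * (2^m * s^(m+1))⁻¹ := by
    rw [Finset.sum_range_succ, aa_eq_zero l (l+1) (by omega)]
    simp
  rw [add_right_comm, hA, hB, ← Finset.mul_sum]

/-- on any compact interval `[d̲, d̄] ⊂ (0, ∞)` there are constants
`C₁, C₂ > 0`, independent of `ℓ`, with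
`C₁ |h_ℓ(ikr)| ≤ |h_{ℓ+1}(ikr)| ≤ C₂ ℓ |h_ℓ(ikr)|` for all `ℓ ≥ 1`. -/
theorem stmt_8 (k dlo dhi : ℝ) (hk : 0 < k) (hdlo : 0 < dlo) (hd : dlo < dhi) :
    ∃ C₁ C₂ : ℝ, 0 < C₁ ∧ 0 < C₂ ∧
      ∀ l : ℕ, 1 ≤ l → ∀ r ∈ Icc dlo dhi,
        C₁ * ‖sphH l (Complex.I * k * r)‖ ≤ ‖sphH (l + 1) (Complex.I * k * r)‖ ∧
        ‖sphH (l + 1) (Complex.I * k * r)‖ ≤ C₂ * l * ‖sphH l (Complex.I * k * r)‖ := by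
  refine ⟨1, 1 + 3/(k*dlo), one_pos, by positivity, ?_⟩
  intro l hl r hr
  have hr0 : 0 < r := lt_of_lt_of_le hdlo hr.1
  have hs : 0 < k * r := mul_pos hk hr0
  have harg : Complex.I * (k:ℂ) * (r:ℂ) = Complex.I * ((k*r : ℝ) : ℂ) := by push_cast; ring
  have hnorm : ∀ n : ℕ, ‖sphH n (Complex.I * k * r)‖ = Real.exp (-(k*r)) * TT n (k*r) := by
    intro n
    rw [harg, sphH_eval n (k*r) hs, norm_mul, norm_mul]
    have h1 : ‖(-1:ℂ)^(n+1)‖ = 1 := by rw [norm_pow]; simp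
    have h2 : ‖(Complex.I)^n‖ = 1 := by rw [norm_pow]; simp
    have hTT := (TT_pos n (k*r) hs).le
    rw [h1, h2, Complex.norm_real, Real.norm_eq_abs,
      _root_.abs_of_nonneg (mul_nonneg (Real.exp_pos (-(k*r))).le hTT)]
    ring
  have hTpos : 0 < TT l (k*r) := TT_pos l (k*r) hs
  have hsucc := TT_succ l (k*r) hs
  have hsum_nonneg : 0 ≤ ∑ m ∈ Finset.range (l+1),
      ((l:ℝ)+m+1) * (aa l m * (2^m * (k*r)^(m+1))⁻¹) := by
    apply Finset.sum_nonneg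
    intro m _
    have := aa_nonneg l m
    positivity
  constructor
  · -- lower bound
    rw [hnorm l, hnorm (l+1), one_mul, hsucc]
    have : 0 ≤ (k*r)⁻¹ * ∑ m ∈ Finset.range (l+1),
        ((l:ℝ)+m+1) * (aa l m * (2^m * (k*r)^(m+1))⁻¹) := by positivity
    nlinarith [Real.exp_pos (-(k*r))]
  · -- upper bound
    rw [hnorm l, hnorm (l+1)]
    have hbound : ∑ m ∈ Finset.range (l+1),
        ((l:ℝ)+m+1) * (aa l m * (2^m * (k*r)^(m+1))⁻¹)
        ≤ (2*(l:ℝ)+1) * TT l (k*r) := by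
      rw [TT, Finset.mul_sum]
      apply Finset.sum_le_sum
      intro m hm
      have hml : (m:ℝ) ≤ l := by exact_mod_cast Nat.lt_succ_iff.1 (Finset.mem_range.1 hm)
      have haapos := aa_nonneg l m
      have hterm : 0 ≤ aa l m * (2^m * (k*r)^(m+1))⁻¹ := by positivity
      nlinarith
    have hsinv : (k*r)⁻¹ ≤ (k*dlo)⁻¹ := by
      apply inv_anti₀ (mul_pos hk hdlo)
      nlinarith [hr.1]
    have hkd : 0 < (k*dlo)⁻¹ := by positivity
    have hl1 : (1:ℝ) ≤ l := by exact_mod_cast hl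
    have hup : TT (l+1) (k*r) ≤ (1 + 3/(k*dlo)) * l * TT l (k*r) := by
      rw [hsucc]
      have h1 : (k*r)⁻¹ * ∑ m ∈ Finset.range (l+1),
          ((l:ℝ)+m+1) * (aa l m * (2^m * (k*r)^(m+1))⁻¹)
          ≤ (k*dlo)⁻¹ * ((2*(l:ℝ)+1) * TT l (k*r)) := by
        apply mul_le_mul hsinv hbound hsum_nonneg hkd.le
      have h3 : 3/(k*dlo) = 3 * (k*dlo)⁻¹ := by ring
      rw [h3]
      nlinarith [mul_nonneg (mul_nonneg hkd.le hTpos.le) (sub_nonneg.2 hl1),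
        mul_nonneg hTpos.le (sub_nonneg.2 hl1)]
    calc Real.exp (-(k*r)) * TT (l+1) (k*r)
        ≤ Real.exp (-(k*r)) * ((1 + 3/(k*dlo)) * l * TT l (k*r)) := by
          apply mul_le_mul_of_nonneg_left hup (Real.exp_pos _).le
      _ = (1 + 3/(k*dlo)) * l * (Real.exp (-(k*r)) * TT l (k*r)) := by ring
end

section
/- For every k > 0 and every pair of real numbers 0 < d̲ < d̄, there exist positive constants C₁ and C₂, independent of ℓ, such that for every integer ℓ ≥ 1 and every r ∈ [d̲, d̄]: C₁ |j_{ℓ+1}(ikr)| ≤ |j_ℓ(ikr)| ≤ C₂ ℓ |j_{ℓ+1}(ikr)|. -/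
open Complex MeasureTheory Set

noncomputable def bKer (l : ℕ) (x : ℂ) : ℂ :=
  ∫ s in (0:ℝ)..1, Complex.cos (x * s) * (1 - (s:ℂ)^2) ^ l

lemma norm_exp_le' (w : ℂ) : ‖Complex.exp w‖ ≤ Real.exp ‖w‖ := by
  rw [Complex.norm_exp]
  exact Real.exp_le_exp.2 ((Complex.re_le_norm w).trans_eq rfl)

lemma norm_sin_le' (z : ℂ) : ‖Complex.sin z‖ ≤ Real.exp ‖z‖ := by
  have h1 : ‖(-z * Complex.I)‖ = ‖z‖ := by simp
  have h2 : ‖(z * Complex.I)‖ = ‖z‖ := by simp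
  calc ‖Complex.sin z‖
      = ‖Complex.exp (-z * Complex.I) - Complex.exp (z * Complex.I)‖ * ‖Complex.I‖ / ‖(2:ℂ)‖ := by
        rw [Complex.sin, norm_div, norm_mul]
    _ = ‖Complex.exp (-z * Complex.I) - Complex.exp (z * Complex.I)‖ / 2 := by
        simp
    _ ≤ (Real.exp ‖z‖ + Real.exp ‖z‖) / 2 := by
        apply div_le_div_of_nonneg_right ?_ (by norm_num) |>.trans_eq rfl
        refine (norm_sub_le _ _).trans ?_
        exact add_le_add ((norm_exp_le' _).trans_eq (by rw [h1])) ((norm_exp_le' _).trans_eq (by rw [h2]))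
    _ = Real.exp ‖z‖ := by ring

lemma cont_F (l : ℕ) (x : ℂ) : Continuous (fun s : ℝ => Complex.cos (x * s) * (1 - (s:ℂ)^2) ^ l) := by
  fun_prop

lemma cont_F' (l : ℕ) (x : ℂ) :
    Continuous (fun s : ℝ => -Complex.sin (x * s) * s * (1 - (s:ℂ)^2) ^ l) := by
  fun_prop

lemma bKer_hasDerivAt (l : ℕ) (x : ℂ) :
    HasDerivAt (bKer l)
      (∫ s in (0:ℝ)..1, -Complex.sin (x * s) * (s:ℂ) * (1 - (s:ℂ)^2) ^ l) x := by
  have h := intervalIntegral.hasDerivAt_integral_of_dominated_loc_of_deriv_le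
    (F := fun (y : ℂ) (s : ℝ) => Complex.cos (y * s) * (1 - (s:ℂ)^2) ^ l)
    (F' := fun (y : ℂ) (s : ℝ) => -Complex.sin (y * s) * (s:ℂ) * (1 - (s:ℂ)^2) ^ l)
    (x₀ := x) (a := 0) (b := 1) (bound := fun _ => Real.exp (‖x‖ + 1))
    (Metric.ball_mem_nhds x one_pos)
    (Filter.Eventually.of_forall fun y => (cont_F l y).aestronglyMeasurable)
    ((cont_F l x).intervalIntegrable _ _)
    (cont_F' l x).aestronglyMeasurable
    ?_ (intervalIntegrable_const (μ := volume)) ?_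
  · exact h.2
  · -- bound
    refine Filter.Eventually.of_forall fun s => fun hs y hy => ?_
    rw [Set.uIoc_of_le (by norm_num : (0:ℝ) ≤ 1)] at hs
    have hs0 : 0 < s := hs.1
    have hs1 : s ≤ 1 := hs.2
    have h1 : ‖(1 - (s:ℂ)^2) ^ l‖ ≤ 1 := by
      rw [norm_pow]
      apply pow_le_one₀ (norm_nonneg _)
      rw [show (1 - (s:ℂ)^2) = ((1 - s^2 : ℝ) : ℂ) by push_cast; ring]
      rw [Complex.norm_real, Real.norm_eq_abs, _root_.abs_of_nonneg (by nlinarith)]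
      nlinarith
    have h2 : ‖(s:ℂ)‖ ≤ 1 := by
      rw [Complex.norm_real, Real.norm_eq_abs, _root_.abs_of_nonneg hs0.le]; exact hs1
    have h3 : ‖Complex.sin (y * s)‖ ≤ Real.exp (‖x‖ + 1) := by
      refine (norm_sin_le' _).trans (Real.exp_le_exp.2 ?_)
      calc ‖y * (s:ℂ)‖ = ‖y‖ * ‖(s:ℂ)‖ := norm_mul _ _
        _ ≤ ‖y‖ * 1 := by nlinarith [norm_nonneg y]
        _ ≤ ‖x‖ + 1 := by
            have := mem_ball_iff_norm.1 hy
            have := norm_sub_norm_le y x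
            nlinarith
    calc ‖-Complex.sin (y * s) * (s:ℂ) * (1 - (s:ℂ)^2) ^ l‖
        = ‖Complex.sin (y * s)‖ * ‖(s:ℂ)‖ * ‖(1 - (s:ℂ)^2) ^ l‖ := by
          rw [norm_mul, norm_mul, norm_neg]
      _ ≤ Real.exp (‖x‖ + 1) * 1 * 1 := by
          have hn1 : (0:ℝ) ≤ ‖Complex.sin (y*(s:ℂ))‖ := norm_nonneg _
          have hn2 : (0:ℝ) ≤ ‖((s:ℝ):ℂ)‖ := norm_nonneg _
          have hn3 : (0:ℝ) ≤ ‖(1 - (s:ℂ)^2) ^ l‖ := norm_nonneg _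
          nlinarith [Real.exp_pos (‖x‖+1), mul_le_mul h3 h2 hn2 (Real.exp_pos (‖x‖+1)).le,
            mul_le_mul (mul_le_mul h3 h2 hn2 (Real.exp_pos (‖x‖+1)).le) h1 hn3
              (by positivity : (0:ℝ) ≤ Real.exp (‖x‖+1) * 1)]
      _ = Real.exp (‖x‖ + 1) := by ring
  · -- differentiability
    refine Filter.Eventually.of_forall fun s hs y hy => ?_
    have hcos : HasDerivAt (fun y : ℂ => Complex.cos (y * s)) (-Complex.sin (y * s) * (s:ℂ)) y := by
      have := (Complex.hasDerivAt_cos (y * s)).comp y ((hasDerivAt_id y).mul_const (s:ℂ))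
      simpa [Function.comp_def] using this
    simpa [mul_comm, mul_assoc, mul_left_comm] using hcos.mul_const ((1 - (s:ℂ)^2) ^ l)

lemma hasDerivAt_sinx (x : ℂ) (s : ℝ) :
    HasDerivAt (fun s : ℝ => Complex.sin (x * s)) (x * Complex.cos (x * s)) s := by
  have h : HasDerivAt (fun z : ℂ => Complex.sin (x * z)) (x * Complex.cos (x * (s:ℂ))) (s:ℂ) := by
    have := (Complex.hasDerivAt_sin (x * (s:ℂ))).comp (s:ℂ) ((hasDerivAt_id ((s:ℝ):ℂ)).const_mul x)
    simpa [mul_comm, Function.comp_def] using this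
  exact h.comp_ofReal

lemma hasDerivAt_v (l : ℕ) (s : ℝ) :
    HasDerivAt (fun s : ℝ => -((1 - (s:ℂ)^2)^(l+1)) / (2*(l+1)))
      ((s:ℂ) * (1 - (s:ℂ)^2)^l) s := by
  have h1 : HasDerivAt (fun z : ℂ => 1 - z^2) (-(2*(s:ℂ))) (s:ℂ) := by
    simpa using ((hasDerivAt_pow 2 ((s:ℝ):ℂ)).const_sub 1)
  have h2 := ((h1.pow (l+1)).neg).div_const (2*((l:ℂ)+1))
  have h3 := h2.comp_ofReal
  refine h3.congr_deriv ?_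
  have hne : ((l:ℂ)+1) ≠ 0 := Nat.cast_add_one_ne_zero l
  simp only [Nat.add_sub_cancel]
  push_cast
  field_simp

lemma bKer_parts (l : ℕ) (x : ℂ) :
    ∫ s in (0:ℝ)..1, -Complex.sin (x * s) * (s:ℂ) * (1 - (s:ℂ)^2) ^ l
      = -(x / (2*(l+1))) * bKer (l+1) x := by
  have hu : ∀ s ∈ Set.uIcc (0:ℝ) 1, HasDerivAt (fun s : ℝ => Complex.sin (x * s))
      (x * Complex.cos (x * s)) s := fun s _ => hasDerivAt_sinx x s
  have hv : ∀ s ∈ Set.uIcc (0:ℝ) 1, HasDerivAt (fun s : ℝ => -((1 - (s:ℂ)^2)^(l+1)) / (2*((l:ℂ)+1)))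
      ((s:ℂ) * (1 - (s:ℂ)^2)^l) s := fun s _ => hasDerivAt_v l s
  have hu' : IntervalIntegrable (fun s : ℝ => x * Complex.cos (x * s)) volume 0 1 :=
    (Continuous.intervalIntegrable (by fun_prop) _ _)
  have hv' : IntervalIntegrable (fun s : ℝ => (s:ℂ) * (1 - (s:ℂ)^2)^l) volume 0 1 :=
    (Continuous.intervalIntegrable (by fun_prop) _ _)
  have hparts := intervalIntegral.integral_mul_deriv_eq_deriv_mul hu hv hu' hv'
  have hLHS : (∫ s in (0:ℝ)..1, -Complex.sin (x * s) * (s:ℂ) * (1 - (s:ℂ)^2) ^ l)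
      = -(∫ s in (0:ℝ)..1, Complex.sin (x * s) * ((s:ℂ) * (1 - (s:ℂ)^2)^l)) := by
    rw [← intervalIntegral.integral_neg]
    congr 1; funext s; ring
  rw [hLHS, hparts]
  have e1 : Complex.sin (x * (0:ℝ)) = 0 := by norm_num
  have e2 : -((1 - ((1:ℝ):ℂ)^2)^(l+1)) / (2*((l:ℂ)+1)) = 0 := by norm_num
  rw [e2, e1]
  have e3 : (∫ s in (0:ℝ)..1, x * Complex.cos (x * s) * (-((1 - (s:ℂ)^2)^(l+1)) / (2*((l:ℂ)+1))))
      = (-(x / (2*((l:ℂ)+1)))) * ∫ s in (0:ℝ)..1, Complex.cos (x * s) * (1 - (s:ℂ)^2)^(l+1) := by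
    rw [← intervalIntegral.integral_const_mul]
    congr 1; funext s; ring
  rw [e3, bKer]
  ring


lemma rayl_eq (l : ℕ) : ∀ x : ℂ, x ≠ 0 →
    (raylD^[l] (fun y => Complex.sin y / y)) x
      = ((-1)^l / (2^l * (Nat.factorial l : ℂ))) * bKer l x := by
  induction l with
  | zero =>
    intro x hx
    have hint : ∀ s ∈ Set.uIcc (0:ℝ) 1, HasDerivAt (fun s : ℝ => Complex.sin (x * s) / x)
        (Complex.cos (x * s)) s := by
      intro s _
      have := (hasDerivAt_sinx x s).div_const x
      refine this.congr_deriv ?_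
      field_simp
    have h := intervalIntegral.integral_eq_sub_of_hasDerivAt hint
      ((Continuous.intervalIntegrable (by fun_prop) _ _))
    simp only [Function.iterate_zero_apply, pow_zero, Nat.factorial_zero, Nat.cast_one, mul_one,
      one_div, bKer, mul_one, one_mul]
    rw [h]
    norm_num
  | succ l ih =>
    intro x hx
    rw [Function.iterate_succ_apply']
    show deriv (raylD^[l] (fun y => Complex.sin y / y)) x / x = _
    have hev : (raylD^[l] (fun y => Complex.sin y / y))
        =ᶠ[nhds x] fun y => ((-1)^l / (2^l * (Nat.factorial l : ℂ))) * bKer l y := by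
      filter_upwards [isOpen_ne.mem_nhds hx] with y hy
      exact ih y hy
    rw [hev.deriv_eq]
    have hd : deriv (fun y => ((-1)^l / (2^l * (Nat.factorial l : ℂ))) * bKer l y) x
        = ((-1)^l / (2^l * (Nat.factorial l : ℂ))) * (-(x / (2*((l:ℂ)+1))) * bKer (l+1) x) := by
      rw [deriv_const_mul _ (bKer_hasDerivAt l x).differentiableAt, (bKer_hasDerivAt l x).deriv,
        bKer_parts]
    rw [hd]
    have hfac : ((Nat.factorial (l+1) : ℂ)) = ((l:ℂ)+1) * (Nat.factorial l : ℂ) := by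
      push_cast [Nat.factorial_succ]; ring
    have h1 : ((l:ℂ)+1) ≠ 0 := Nat.cast_add_one_ne_zero l
    have h2 : (Nat.factorial l : ℂ) ≠ 0 := by
      exact_mod_cast Nat.cast_ne_zero.2 (Nat.factorial_ne_zero l)
    rw [hfac]
    field_simp
    ring

noncomputable def rK (l : ℕ) (t : ℝ) : ℝ := ∫ s in (0:ℝ)..1, Real.cosh (t*s) * (1-s^2)^l

lemma cont_rK (l : ℕ) (t : ℝ) : Continuous (fun s : ℝ => Real.cosh (t*s) * (1-s^2)^l) := by
  fun_prop

lemma bKer_I (l : ℕ) (t : ℝ) : bKer l (Complex.I * t) = ((rK l t : ℝ) : ℂ) := by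
  rw [bKer, rK, ← intervalIntegral.integral_ofReal]
  apply intervalIntegral.integral_congr
  intro s _
  push_cast
  rw [show Complex.I * (t:ℂ) * (s:ℂ) = ((t:ℂ)*(s:ℂ)) * Complex.I by ring, Complex.cos_mul_I]

lemma rK_pos (l : ℕ) (t : ℝ) : 0 < rK l t := by
  apply intervalIntegral.intervalIntegral_pos_of_pos_on ((cont_rK l t).intervalIntegrable _ _)
  · intro s hs
    have h1 : 0 < 1 - s^2 := by nlinarith [hs.1, hs.2]
    positivity
  · norm_num

lemma rK_mono (l : ℕ) (t : ℝ) : rK (l+1) t ≤ rK l t := by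
  apply intervalIntegral.integral_mono_on (by norm_num)
    ((cont_rK _ t).intervalIntegrable _ _) ((cont_rK _ t).intervalIntegrable _ _)
  intro s hs
  have h0 : 0 ≤ 1 - s^2 := by nlinarith [hs.1, hs.2]
  have h1 : 1 - s^2 ≤ 1 := by nlinarith [hs.1]
  exact mul_le_mul_of_nonneg_left (pow_le_pow_of_le_one h0 h1 (Nat.le_succ l)) (Real.cosh_pos _).le

lemma integral_s_pow (l : ℕ) : (∫ s in (0:ℝ)..1, s * (1-s^2)^l) = 1/(2*((l:ℝ)+1)) := by
  have hv : ∀ s ∈ Set.uIcc (0:ℝ) 1, HasDerivAt (fun s : ℝ => -((1 - s^2)^(l+1)) / (2*((l:ℝ)+1)))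
      (s * (1 - s^2)^l) s := by
    intro s _
    have h1 : HasDerivAt (fun z : ℝ => 1 - z^2) (-(2*s)) s := by
      simpa using ((hasDerivAt_pow 2 s).const_sub 1)
    have h2 := ((h1.pow (l+1)).neg).div_const (2*((l:ℝ)+1))
    refine h2.congr_deriv ?_
    have hne : ((l:ℝ)+1) ≠ 0 := by positivity
    simp only [Nat.add_sub_cancel]
    push_cast
    field_simp
  have h := intervalIntegral.integral_eq_sub_of_hasDerivAt hv
    ((Continuous.intervalIntegrable (by fun_prop) _ _))
  rw [h]
  norm_num
  have hne : ((l:ℝ)+1) ≠ 0 := by positivity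
  field_simp

lemma rK_diff (l : ℕ) (t : ℝ) (ht : 0 ≤ t) :
    rK l t - rK (l+1) t ≤ Real.cosh t / (2*(l+1)) := by
  have heq : rK l t - rK (l+1) t = ∫ s in (0:ℝ)..1, Real.cosh (t*s) * (s^2 * (1-s^2)^l) := by
    rw [rK, rK, ← intervalIntegral.integral_sub ((cont_rK _ t).intervalIntegrable _ _)
      ((cont_rK _ t).intervalIntegrable _ _)]
    congr 1; funext s; ring
  rw [heq]
  have hb : (∫ s in (0:ℝ)..1, Real.cosh (t*s) * (s^2 * (1-s^2)^l))
      ≤ ∫ s in (0:ℝ)..1, Real.cosh t * (s * (1-s^2)^l) := by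
    apply intervalIntegral.integral_mono_on (by norm_num)
      (Continuous.intervalIntegrable (by fun_prop) _ _)
      (Continuous.intervalIntegrable (by fun_prop) _ _)
    intro s hs
    have h0 : 0 ≤ 1 - s^2 := by nlinarith [hs.1, hs.2]
    have hc1 : Real.cosh (t*s) ≤ Real.cosh t := by
      rw [Real.cosh_le_cosh]
      rw [_root_.abs_of_nonneg (mul_nonneg ht hs.1), _root_.abs_of_nonneg ht]
      nlinarith [hs.1, hs.2]
    have hc0 : 0 < Real.cosh (t*s) := Real.cosh_pos _
    have hs2 : s^2 ≤ s := by nlinarith [hs.1, hs.2]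
    have hp : 0 ≤ (1-s^2)^l := by positivity
    calc Real.cosh (t*s) * (s^2 * (1-s^2)^l) ≤ Real.cosh t * (s^2 * (1-s^2)^l) :=
          mul_le_mul_of_nonneg_right hc1 (mul_nonneg (by nlinarith [hs.1] : (0:ℝ) ≤ s^2) hp)
      _ ≤ Real.cosh t * (s * (1-s^2)^l) :=
          mul_le_mul_of_nonneg_left (mul_le_mul_of_nonneg_right hs2 hp) (Real.cosh_pos _).le
  calc (∫ s in (0:ℝ)..1, Real.cosh (t*s) * (s^2 * (1-s^2)^l))
      ≤ ∫ s in (0:ℝ)..1, Real.cosh t * (s * (1-s^2)^l) := hb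
    _ = Real.cosh t * ∫ s in (0:ℝ)..1, s * (1-s^2)^l := by
        rw [← intervalIntegral.integral_const_mul]
    _ = Real.cosh t / (2*(l+1)) := by rw [integral_s_pow]; ring

lemma rK_lb (l : ℕ) (t : ℝ) : 1/((l:ℝ)+2) ≤ rK (l+1) t := by
  have hb : (∫ s in (0:ℝ)..1, (1-s)^(l+1)) ≤ rK (l+1) t := by
    apply intervalIntegral.integral_mono_on (by norm_num)
      (Continuous.intervalIntegrable (by fun_prop) _ _)
      ((cont_rK _ t).intervalIntegrable _ _)
    intro s hs
    have h0 : 0 ≤ 1 - s := by linarith [hs.2]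
    have h1 : 1 - s ≤ 1 - s^2 := by nlinarith [hs.1, hs.2]
    have hc : 1 ≤ Real.cosh (t*s) := Real.one_le_cosh _
    calc (1-s)^(l+1) = 1 * (1-s)^(l+1) := (one_mul _).symm
      _ ≤ Real.cosh (t*s) * (1-s^2)^(l+1) :=
          mul_le_mul hc (pow_le_pow_left₀ h0 h1 (l+1)) (pow_nonneg h0 _) (Real.cosh_pos _).le
  refine le_trans (le_of_eq ?_) hb
  rw [intervalIntegral.integral_comp_sub_left (fun s => s^(l+1)) 1]
  norm_num [integral_pow]
  ring

lemma norm_sphJ (l : ℕ) (t : ℝ) (ht : 0 < t) :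
    ‖sphJ l (Complex.I * t)‖ = t^l / (2^l * (Nat.factorial l : ℝ)) * rK l t := by
  have hne : Complex.I * (t:ℂ) ≠ 0 :=
    mul_ne_zero Complex.I_ne_zero (by exact_mod_cast ht.ne')
  rw [sphJ, rayl_eq l _ hne, bKer_I]
  simp only [norm_mul, norm_pow, norm_neg, norm_div, norm_one, Complex.norm_I,
    Complex.norm_real, Complex.norm_natCast, one_mul, Real.norm_eq_abs,
    _root_.abs_of_pos ht, _root_.abs_of_pos (rK_pos l t), Complex.norm_ofNat]
  ring

/-- on any compact interval `[d̲, d̄] ⊂ (0, ∞)` there are constants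
`C₁, C₂ > 0`, independent of `ℓ`, with
`C₁ |j_{ℓ+1}(ikr)| ≤ |j_ℓ(ikr)| ≤ C₂ ℓ |j_{ℓ+1}(ikr)|` for all `ℓ ≥ 1`. -/
theorem stmt_9 (k dlo dhi : ℝ) (hk : 0 < k) (hdlo : 0 < dlo) (hd : dlo < dhi) :
    ∃ C₁ C₂ : ℝ, 0 < C₁ ∧ 0 < C₂ ∧
      ∀ l : ℕ, 1 ≤ l → ∀ r ∈ Icc dlo dhi,
        C₁ * ‖sphJ (l + 1) (Complex.I * k * r)‖ ≤ ‖sphJ l (Complex.I * k * r)‖ ∧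
        ‖sphJ l (Complex.I * k * r)‖ ≤ C₂ * l * ‖sphJ (l + 1) (Complex.I * k * r)‖ := by
  have hkd : 0 < k * dhi := mul_pos hk (hdlo.trans hd)
  have hkdlo : 0 < k * dlo := mul_pos hk hdlo
  refine ⟨4/(k*dhi), 4*(1+Real.cosh (k*dhi))/(k*dlo), div_pos (by norm_num) hkd,
    div_pos (by nlinarith [Real.cosh_pos (k*dhi)]) hkdlo, ?_⟩
  intro l hl r hr
  set t : ℝ := k * r with htdef
  have ht : 0 < t := by have := hr.1; nlinarith
  have ht1 : k * dlo ≤ t := by have := hr.1; nlinarith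
  have ht2 : t ≤ k * dhi := by have := hr.2; nlinarith
  have harg : Complex.I * (k:ℂ) * (r:ℂ) = Complex.I * ((t:ℝ):ℂ) := by
    rw [htdef]; push_cast; ring
  rw [harg, norm_sphJ l t ht, norm_sphJ (l+1) t ht]
  set A : ℝ := t^l / (2^l * (Nat.factorial l : ℝ)) with hA
  have hApos : 0 < A := by positivity
  have hred : t^(l+1) / (2^(l+1) * (Nat.factorial (l+1) : ℝ))
      = A * (t / (2*((l:ℝ)+1))) := by
    rw [hA, pow_succ, pow_succ, Nat.factorial_succ]
    push_cast
    have h1 : (Nat.factorial l : ℝ) ≠ 0 := by positivity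
    have h2 : ((l:ℝ)+1) ≠ 0 := by positivity
    field_simp
  rw [hred]
  have hKpos := rK_pos (l+1) t
  have hKpos' := rK_pos l t
  have hmono := rK_mono l t
  have hl1 : (1:ℝ) ≤ (l:ℝ) := by exact_mod_cast hl
  constructor
  · -- lower bound
    have hfrac : 4/(k*dhi) * (t / (2*((l:ℝ)+1))) ≤ 1 := by
      rw [div_mul_div_comm, div_le_one (by positivity)]
      nlinarith
    calc 4/(k*dhi) * (A * (t / (2*((l:ℝ)+1))) * rK (l+1) t)
        = (4/(k*dhi) * (t / (2*((l:ℝ)+1)))) * (A * rK (l+1) t) := by ring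
      _ ≤ 1 * (A * rK (l+1) t) := by
          apply mul_le_mul_of_nonneg_right hfrac (by positivity)
      _ = A * rK (l+1) t := one_mul _
      _ ≤ A * rK l t := mul_le_mul_of_nonneg_left hmono hApos.le
  · -- upper bound
    have hupper : rK l t ≤ (1 + Real.cosh (k*dhi)) * rK (l+1) t := by
      have hd1 := rK_diff l t ht.le
      have hd2 := rK_lb l t
      have hcosh : Real.cosh t ≤ Real.cosh (k*dhi) := by
        rw [Real.cosh_le_cosh, _root_.abs_of_pos ht, _root_.abs_of_pos hkd]
        exact ht2
      have hcoshpos : 0 < Real.cosh t := Real.cosh_pos _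
      have hstep : Real.cosh t / (2*((l:ℝ)+1)) ≤ Real.cosh t * rK (l+1) t := by
        calc Real.cosh t / (2*((l:ℝ)+1)) ≤ Real.cosh t * (1/((l:ℝ)+2)) := by
              rw [mul_one_div]
              apply div_le_div_of_nonneg_left hcoshpos.le (by positivity) (by linarith)
          _ ≤ Real.cosh t * rK (l+1) t := mul_le_mul_of_nonneg_left hd2 hcoshpos.le
      nlinarith [mul_le_mul_of_nonneg_left hmono hcoshpos.le,
        mul_le_mul_of_nonneg_right hcosh hKpos.le]
    have hfrac2 : (1 + Real.cosh (k*dhi))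
        ≤ 4*(1+Real.cosh (k*dhi))/(k*dlo) * (l:ℝ) * (t / (2*((l:ℝ)+1))) := by
      have hc : 0 < 1 + Real.cosh (k*dhi) := by nlinarith [Real.cosh_pos (k*dhi)]
      have key : k*dlo * (2*((l:ℝ)+1)) ≤ 4 * (l:ℝ) * t := by nlinarith
      have hrw : 4*(1+Real.cosh (k*dhi))/(k*dlo) * (l:ℝ) * (t / (2*((l:ℝ)+1)))
          = (4*(1+Real.cosh (k*dhi)) * (l:ℝ) * t) / ((k*dlo) * (2*((l:ℝ)+1))) := by
        field_simp
      rw [hrw, le_div_iff₀ (by positivity)]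
      nlinarith [mul_le_mul_of_nonneg_left key hc.le]
    calc A * rK l t ≤ A * ((1 + Real.cosh (k*dhi)) * rK (l+1) t) :=
          mul_le_mul_of_nonneg_left hupper hApos.le
      _ ≤ A * ((4*(1+Real.cosh (k*dhi))/(k*dlo) * (l:ℝ) * (t / (2*((l:ℝ)+1)))) * rK (l+1) t) := by
          apply mul_le_mul_of_nonneg_left (mul_le_mul_of_nonneg_right hfrac2 hKpos.le) hApos.le
      _ = 4*(1+Real.cosh (k*dhi))/(k*dlo) * (l:ℝ) * (A * (t / (2*((l:ℝ)+1))) * rK (l+1) t) := by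
          ring
end

section
/- For every k > 0 and every pair of real numbers 0 < d̲ < d̄, there exists a constant C > 0, independent of ℓ, such that for every integer ℓ ≥ 1 and every r ∈ [d̲, d̄]: |d/dr j_ℓ(ikr)| ≤ C (ℓ + 1) |j_ℓ(ikr)| and |d/dr h_ℓ(ikr)| ≤ C (ℓ + 1) |h_ℓ(ikr)|. -/
open Complex MeasureTheory Set

noncomputable def besI (l : ℕ) (t : ℝ) : ℝ :=
  ∫ s in (0:ℝ)..1, (1 - s ^ 2) ^ l * Real.cosh (s * t)

noncomputable def hP : ℕ → Polynomial ℝ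
  | 0 => Polynomial.X
  | (l+1) => Polynomial.X * hP l + Polynomial.X ^ 3 * (hP l).derivative



-- analyticity
lemma raylD_analytic {f : ℂ → ℂ} (hf : AnalyticOnNhd ℂ f {x : ℂ | x ≠ 0}) :
    AnalyticOnNhd ℂ (raylD f) {x : ℂ | x ≠ 0} := by
  have h0 : IsOpen {x : ℂ | x ≠ 0} := isOpen_ne
  exact (hf.deriv).div analyticOnNhd_id (fun x hx => hx)

lemma iter_analytic {f : ℂ → ℂ} (hf : AnalyticOnNhd ℂ f {x : ℂ | x ≠ 0}) (l : ℕ) :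
    AnalyticOnNhd ℂ (raylD^[l] f) {x : ℂ | x ≠ 0} := by
  induction l with
  | zero => exact hf
  | succ n ih => rw [Function.iterate_succ_apply']; exact raylD_analytic ih

lemma sin_div_analytic : AnalyticOnNhd ℂ (fun y => Complex.sin y / y) {x : ℂ | x ≠ 0} := by
  have h0 : IsOpen {x : ℂ | x ≠ 0} := isOpen_ne
  exact ((Complex.differentiable_sin.differentiableOn).analyticOnNhd h0).div
    analyticOnNhd_id (fun x hx => hx)

lemma exp_div_analytic :
    AnalyticOnNhd ℂ (fun y => Complex.exp (Complex.I * y) / y) {x : ℂ | x ≠ 0} := by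
  have h0 : IsOpen {x : ℂ | x ≠ 0} := isOpen_ne
  have : Differentiable ℂ (fun y : ℂ => Complex.exp (Complex.I * y)) :=
    (Complex.differentiable_exp.comp ((differentiable_id.const_mul _)))
  exact ((this.differentiableOn).analyticOnNhd h0).div analyticOnNhd_id (fun x hx => hx)

-- ray lemma
lemma hasDerivAt_comp_ray {g : ℂ → ℂ} {c g' : ℂ} {r : ℝ} (h : HasDerivAt g g' (c * r)) :
    HasDerivAt (fun s : ℝ => g (c * s)) (c * g') r := by
  have h1 : HasDerivAt (fun z : ℂ => g (c * z)) (g' * c) (r : ℂ) := by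
    simpa [Function.comp_def] using (h.comp (r : ℂ) ((hasDerivAt_id ((r : ℂ))).const_mul c))
  simpa [mul_comm] using h1.comp_ofReal

-- transfer lemma
lemma raylD_apply_imag {g : ℂ → ℂ} (hg : AnalyticOnNhd ℂ g {x : ℂ | x ≠ 0})
    {F F' : ℝ → ℂ} (hFg : ∀ t : ℝ, 0 < t → g (Complex.I * t) = F t)
    {t : ℝ} (ht : 0 < t) (hF : HasDerivAt F (F' t) t) :
    raylD g (Complex.I * t) = -F' t / t := by
  have hz : (Complex.I * t) ≠ 0 := by
    simp [Complex.ext_iff, ht.ne']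
  have hd : HasDerivAt g (deriv g (Complex.I * t)) (Complex.I * t) :=
    ((hg _ hz).differentiableAt).hasDerivAt
  have h2 : HasDerivAt (fun s : ℝ => g (Complex.I * s)) (Complex.I * deriv g (Complex.I * t)) t :=
    hasDerivAt_comp_ray hd
  have heq : (fun s : ℝ => g (Complex.I * s)) =ᶠ[nhds t] F := by
    filter_upwards [eventually_gt_nhds ht] with s hs using hFg s hs
  have h3 : HasDerivAt F (Complex.I * deriv g (Complex.I * t)) t := by
    exact h2.congr_of_eventuallyEq heq.symm
  have h4 : Complex.I * deriv g (Complex.I * t) = F' t := h3.unique hF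
  have h5 : deriv g (Complex.I * t) = -Complex.I * F' t := by
    rw [← h4]; rw [neg_mul, ← mul_assoc]; simp [Complex.I_mul_I]
  unfold raylD
  rw [h5]
  have htne : (t : ℂ) ≠ 0 := by exact_mod_cast ht.ne'
  rw [neg_mul, ← mul_neg, mul_div_mul_left _ _ Complex.I_ne_zero, neg_div]



lemma hP_coeff_nonneg (l n : ℕ) : 0 ≤ (hP l).coeff n := by
  induction l generalizing n with
  | zero =>
    rw [hP, Polynomial.coeff_X]
    split <;> norm_num
  | succ m ih =>
    rw [hP, Polynomial.coeff_add]
    have h1 : 0 ≤ (Polynomial.X * hP m).coeff n := by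
      rw [show Polynomial.X * hP m = hP m * Polynomial.X ^ 1 by ring,
        Polynomial.coeff_mul_X_pow']
      split
      · exact ih _
      · exact le_refl _
    have h2 : 0 ≤ (Polynomial.X ^ 3 * (hP m).derivative).coeff n := by
      rw [show Polynomial.X ^ 3 * (hP m).derivative = (hP m).derivative * Polynomial.X ^ 3 by
        ring, Polynomial.coeff_mul_X_pow']
      split
      · rw [Polynomial.coeff_derivative]
        exact mul_nonneg (ih _) (by positivity)
      · exact le_refl _
    positivity

lemma hP_natDegree_le (l : ℕ) : (hP l).natDegree ≤ 2 * l + 1 := by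
  induction l with
  | zero => simp [hP]
  | succ m ih =>
    rw [hP]
    refine (Polynomial.natDegree_add_le _ _).trans ?_
    have h1 : (Polynomial.X * hP m).natDegree ≤ 2 * m + 2 := by
      refine (Polynomial.natDegree_mul_le).trans ?_
      simpa [Polynomial.natDegree_X] using by omega
    have h2 : (Polynomial.X ^ 3 * (hP m).derivative).natDegree ≤ 2 * (m + 1) + 1 := by
      refine (Polynomial.natDegree_mul_le).trans ?_
      have := Polynomial.natDegree_derivative_le (hP m)
      have hx : (Polynomial.X ^ 3 : Polynomial ℝ).natDegree = 3 := by
        simp [Polynomial.natDegree_X_pow]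
      omega
    omega

lemma eval_nonneg_of_coeff_nonneg {p : Polynomial ℝ} (hp : ∀ n, 0 ≤ p.coeff n)
    {u : ℝ} (hu : 0 ≤ u) : 0 ≤ p.eval u := by
  rw [Polynomial.eval_eq_sum_range]
  exact Finset.sum_nonneg fun i _ => mul_nonneg (hp i) (pow_nonneg hu i)

lemma hP_eval_pos (l : ℕ) {u : ℝ} (hu : 0 < u) : 0 < (hP l).eval u := by
  induction l with
  | zero => simpa [hP]
  | succ m ih =>
    rw [hP]
    have h2 : 0 ≤ ((hP m).derivative).eval u := by
      refine eval_nonneg_of_coeff_nonneg (fun n => ?_) hu.le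
      rw [Polynomial.coeff_derivative]
      have := hP_coeff_nonneg m (n+1)
      positivity
    simp only [Polynomial.eval_add, Polynomial.eval_mul, Polynomial.eval_pow, Polynomial.eval_X]
    nlinarith [ih, pow_pos hu 3]

lemma hP_deriv_eval_le (l : ℕ) {u : ℝ} (hu : 0 ≤ u) :
    u * ((hP l).derivative).eval u ≤ (2 * l + 1) * (hP l).eval u := by
  set p := hP l with hpdef
  have hp : p.natDegree ≤ 2 * l + 1 := hP_natDegree_le l
  have hdeg : p.natDegree < 2 * l + 2 := by omega
  have hdeg' : p.derivative.natDegree < 2 * l + 2 :=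
    lt_of_le_of_lt (Polynomial.natDegree_derivative_le p) (by omega)
  rw [Polynomial.eval_eq_sum_range' hdeg, Polynomial.eval_eq_sum_range' hdeg']
  rw [Finset.mul_sum, Finset.mul_sum]
  have key : ∀ i ∈ Finset.range (2 * l + 2),
      u * (p.derivative.coeff i * u ^ i) ≤ (2 * l + 1) * (p.coeff (i+1) * u ^ (i+1)) := by
    intro i hi
    rw [Polynomial.coeff_derivative]
    have hc := hP_coeff_nonneg l (i + 1)
    rcases Finset.mem_range.mp hi with h
    have hle : (i + 1 : ℝ) ≤ 2 * l + 1 ∨ p.coeff (i + 1) = 0 := by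
      by_cases hone : i + 1 ≤ 2 * l + 1
      · left; exact_mod_cast hone
      · right
        exact Polynomial.coeff_eq_zero_of_natDegree_lt (by omega)
    have hpw : 0 ≤ u ^ i := pow_nonneg hu i
    rcases hle with hle | hz
    · have base : 0 ≤ p.coeff (i+1) * u ^ i * u := mul_nonneg (mul_nonneg hc hpw) hu
      have hmul := mul_le_mul_of_nonneg_right hle base
      calc u * (p.coeff (i+1) * ((i:ℝ)+1) * u ^ i)
            = ((i:ℝ)+1) * (p.coeff (i+1) * u ^ i * u) := by ring
        _ ≤ (2*(l:ℝ)+1) * (p.coeff (i+1) * u ^ i * u) := hmul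
        _ = (2 * l + 1) * (p.coeff (i+1) * u ^ (i+1)) := by ring
    · simp [hz]
  calc ∑ i ∈ Finset.range (2*l+2), u * (p.derivative.coeff i * u ^ i)
      ≤ ∑ i ∈ Finset.range (2*l+2), (2 * l + 1) * (p.coeff (i+1) * u ^ (i+1)) :=
        Finset.sum_le_sum key
    _ ≤ ∑ i ∈ Finset.range (2*l+2), (2 * l + 1) * (p.coeff i * u ^ i) := by
        have hc0 := hP_coeff_nonneg l 0
        have h0 : (0:ℝ) ≤ (2*(l:ℝ)+1) * (p.coeff 0 * u ^ 0) := by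
          have hpw0 : (0:ℝ) ≤ u ^ 0 := by norm_num
          have : (0:ℝ) ≤ 2*(l:ℝ)+1 := by positivity
          exact mul_nonneg this (mul_nonneg hc0 hpw0)
        have hlast : (2*(l:ℝ)+1) * (p.coeff (2*l+1+1) * u ^ (2*l+1+1)) = 0 := by
          rw [Polynomial.coeff_eq_zero_of_natDegree_lt (by omega)]; ring
        rw [Finset.sum_range_succ' (fun i => (2*(l:ℝ)+1) * (p.coeff i * u ^ i)) (2*l+1),
          Finset.sum_range_succ (fun i => (2*(l:ℝ)+1) * (p.coeff (i+1) * u ^ (i+1))) (2*l+1)]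
        linarith [hlast]



lemma besI_cont (l : ℕ) (t : ℝ) :
    Continuous (fun s : ℝ => (1 - s ^ 2) ^ l * Real.cosh (s * t)) := by
  fun_prop

lemma besI_integrable (l : ℕ) (t : ℝ) :
    IntervalIntegrable (fun s : ℝ => (1 - s ^ 2) ^ l * Real.cosh (s * t))
      volume 0 1 := (besI_cont l t).intervalIntegrable _ _

lemma besI_pos (l : ℕ) (t : ℝ) : 0 < besI l t := by
  apply intervalIntegral.intervalIntegral_pos_of_pos_on (besI_integrable l t)
  · intro s hs
    have h1 : 0 < 1 - s ^ 2 := by nlinarith [hs.1, hs.2]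
    have h2 : 0 < Real.cosh (s * t) := Real.cosh_pos _
    positivity
  · norm_num

lemma besI_mono (l : ℕ) (t : ℝ) : besI (l + 1) t ≤ besI l t := by
  apply intervalIntegral.integral_mono_on (by norm_num) (besI_integrable (l+1) t)
    (besI_integrable l t)
  intro s hs
  have h1 : 0 ≤ 1 - s ^ 2 := by nlinarith [hs.1, hs.2]
  have h2 : 1 - s ^ 2 ≤ 1 := by nlinarith [hs.1]
  have h3 : 0 < Real.cosh (s * t) := Real.cosh_pos _
  have h4 := pow_le_pow_of_le_one h1 h2 (Nat.le_succ l)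
  have : (1 - s ^ 2) ^ (l+1) ≤ (1 - s ^ 2) ^ l := h4
  exact mul_le_mul_of_nonneg_right this h3.le

lemma besI_zero {t : ℝ} (ht : t ≠ 0) : besI 0 t = Real.sinh t / t := by
  have h : ∀ s ∈ Set.uIcc (0:ℝ) 1, HasDerivAt (fun s : ℝ => Real.sinh (s * t) / t)
      ((1 - s ^ 2) ^ 0 * Real.cosh (s * t)) s := by
    intro s _
    have h1 : HasDerivAt (fun s : ℝ => s * t) t s := by
      simpa using (hasDerivAt_id s).mul_const t
    have h2 := (Real.hasDerivAt_sinh (s * t)).comp s h1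
    have h3 := h2.div_const t
    simpa [mul_div_assoc, mul_div_cancel_right₀ _ ht] using h3
  have := intervalIntegral.integral_eq_sub_of_hasDerivAt h (besI_integrable 0 t)
  unfold besI
  rw [this]
  simp

lemma besI_intF (l : ℕ) (t : ℝ) :
    IntervalIntegrable (fun s : ℝ => (1 - s ^ 2) ^ l * (s * Real.sinh (s * t)))
      volume 0 1 := by
  apply Continuous.intervalIntegrable
  fun_prop

lemma besI_parts (l : ℕ) (t : ℝ) :
    (∫ s in (0:ℝ)..1, (1 - s ^ 2) ^ l * (s * Real.sinh (s * t)))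
      = t / (2 * (l + 1)) * besI (l + 1) t := by
  have hder : ∀ s ∈ Set.uIcc (0:ℝ) 1,
      HasDerivAt (fun s : ℝ => -(1 - s ^ 2) ^ (l + 1) / (2 * (l + 1)) * Real.sinh (s * t))
        ((1 - s ^ 2) ^ l * (s * Real.sinh (s * t))
          - t / (2 * (l + 1)) * ((1 - s ^ 2) ^ (l + 1) * Real.cosh (s * t))) s := by
    intro s _
    have hg : HasDerivAt (fun s : ℝ => -(1 - s ^ 2) ^ (l + 1) / (2 * (l + 1)))
        ((l + 1 : ℝ) * (1 - s ^ 2) ^ l * (2 * s) / (2 * (l + 1))) s := by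
      have h1 : HasDerivAt (fun s : ℝ => 1 - s ^ 2) (-(2 * s)) s := by
        simpa using ((hasDerivAt_pow 2 s).const_sub 1)
      have h2 := (h1.pow (l + 1)).neg.div_const (2 * (l + 1) : ℝ)
      refine h2.congr_deriv ?_
      push_cast
      ring
    have hh : HasDerivAt (fun s : ℝ => Real.sinh (s * t)) (t * Real.cosh (s * t)) s := by
      have h1 : HasDerivAt (fun s : ℝ => s * t) t s := by
        simpa using (hasDerivAt_id s).mul_const t
      simpa [mul_comm, Function.comp_def] using ((Real.hasDerivAt_sinh (s * t)).comp s h1)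
    have := hg.mul hh
    refine this.congr_deriv ?_
    have hl : (2 * ((l : ℝ) + 1)) ≠ 0 := by positivity
    field_simp
    ring
  have hint : IntervalIntegrable (fun s : ℝ =>
      (1 - s ^ 2) ^ l * (s * Real.sinh (s * t))
        - t / (2 * (l + 1)) * ((1 - s ^ 2) ^ (l + 1) * Real.cosh (s * t))) volume 0 1 := by
    apply Continuous.intervalIntegrable
    fun_prop
  have hzero := intervalIntegral.integral_eq_sub_of_hasDerivAt hder hint
  have h0 : (∫ s in (0:ℝ)..1,
      ((1 - s ^ 2) ^ l * (s * Real.sinh (s * t))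
        - t / (2 * (l + 1)) * ((1 - s ^ 2) ^ (l + 1) * Real.cosh (s * t)))) = 0 := by
    rw [hzero]; norm_num
  rw [intervalIntegral.integral_sub (besI_intF l t)
    (g := fun s => t / (2 * (l + 1)) * ((1 - s ^ 2) ^ (l + 1) * Real.cosh (s * t)))
    ((continuous_const.mul (besI_cont (l+1) t)).intervalIntegrable _ _)] at h0
  have h1 : (∫ s in (0:ℝ)..1, t / (2 * (l + 1)) * ((1 - s ^ 2) ^ (l + 1) * Real.cosh (s * t)))
      = t / (2 * (l + 1)) * besI (l + 1) t := by
    rw [intervalIntegral.integral_const_mul]; rfl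
  rw [h1] at h0
  linarith [h0]

lemma besI_hasDerivAt (l : ℕ) (t : ℝ) :
    HasDerivAt (besI l) (t / (2 * (l + 1)) * besI (l + 1) t) t := by
  rw [← besI_parts l t]
  have key := intervalIntegral.hasDerivAt_integral_of_dominated_loc_of_deriv_le
    (F := fun (x : ℝ) (s : ℝ) => (1 - s ^ 2) ^ l * Real.cosh (s * x))
    (F' := fun (x : ℝ) (s : ℝ) => (1 - s ^ 2) ^ l * (s * Real.sinh (s * x)))
    (x₀ := t) (a := 0) (b := 1) (μ := volume)
    (bound := fun _ => Real.sinh (|t| + 1))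
    (Metric.ball_mem_nhds t one_pos) ?_ ?_ ?_ ?_ ?_ ?_
  · exact key.2
  · filter_upwards with x
    exact ((besI_cont l x).aestronglyMeasurable).restrict
  · exact besI_integrable l t
  · exact (Continuous.aestronglyMeasurable (by fun_prop)).restrict
  · filter_upwards with s hs x hx
    have hs' : s ∈ Set.Ioc (0:ℝ) 1 := by
      simpa [Set.uIoc_of_le (by norm_num : (0:ℝ) ≤ 1)] using hs
    have h1 : 0 ≤ 1 - s ^ 2 := by nlinarith [hs'.1, hs'.2]
    have h2 : (1 - s ^ 2) ^ l ≤ 1 := by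
      apply pow_le_one₀ h1; nlinarith [hs'.1]
    have h3 : |Real.sinh (s * x)| ≤ Real.sinh (|t| + 1) := by
      rw [Real.abs_sinh]
      apply Real.sinh_le_sinh.mpr
      have hxb : |x - t| < 1 := by simpa [Real.dist_eq] using (Metric.mem_ball.mp hx)
      have hsle : |s| ≤ 1 := by rw [abs_of_pos hs'.1]; exact hs'.2
      have hsx : |s * x| ≤ |x| := by
        rw [abs_mul]; exact mul_le_of_le_one_left (abs_nonneg x) hsle
      have hxt : |x| ≤ |t| + 1 := by
        have := abs_sub_abs_le_abs_sub x t
        linarith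
      linarith
    have hsle : |s| ≤ 1 := by rw [abs_of_pos hs'.1]; exact hs'.2
    have h4 : |(1 - s ^ 2) ^ l| = (1 - s ^ 2) ^ l := abs_of_nonneg (pow_nonneg h1 l)
    have h5 : 0 ≤ Real.sinh (|t| + 1) := Real.sinh_nonneg_iff.mpr (by positivity)
    rw [Real.norm_eq_abs, abs_mul, abs_mul, h4]
    have hBC : |s| * |Real.sinh (s * x)| ≤ |Real.sinh (s * x)| :=
      mul_le_of_le_one_left (abs_nonneg _) hsle
    have hA : (1 - s ^ 2) ^ l * (|s| * |Real.sinh (s * x)|) ≤ |s| * |Real.sinh (s * x)| :=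
      mul_le_of_le_one_left (mul_nonneg (abs_nonneg _) (abs_nonneg _)) h2
    linarith
  · apply Continuous.intervalIntegrable; fun_prop
  · filter_upwards with s hs x hx
    have h1 : HasDerivAt (fun x : ℝ => s * x) s x := by
      simpa using (hasDerivAt_id x).const_mul s
    have h2 := (Real.hasDerivAt_cosh (s * x)).comp x h1
    simpa [mul_comm, mul_left_comm, mul_assoc] using (h2.const_mul ((1 - s ^ 2) ^ l))


lemma sphJ_val (l : ℕ) : ∀ t : ℝ, 0 < t →
    (raylD^[l] (fun y => Complex.sin y / y)) (Complex.I * t)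
      = ((((-1)^l * ((1 / (2^l * l.factorial)) * besI l t)) : ℝ) : ℂ) := by
  induction l with
  | zero =>
    intro t ht
    simp only [Function.iterate_zero, id_eq]
    have h1 : Complex.I * (t : ℂ) = (t : ℂ) * Complex.I := mul_comm _ _
    rw [h1, Complex.sin_mul_I, mul_div_mul_right _ _ Complex.I_ne_zero]
    rw [← Complex.ofReal_sinh, besI_zero ht.ne']
    push_cast
    simp [Nat.factorial]
  | succ m ih =>
    intro t ht
    rw [Function.iterate_succ_apply']
    set c : ℝ := (-1)^m * (1 / (2^m * m.factorial)) with hc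
    have ih' : ∀ s : ℝ, 0 < s → (raylD^[m] (fun y => Complex.sin y / y)) (Complex.I * s)
        = ((c * besI m s : ℝ) : ℂ) := by
      intro s hs; rw [ih s hs]; congr 1; rw [hc]; ring
    have hF : HasDerivAt (fun s : ℝ => ((c * besI m s : ℝ) : ℂ))
        ((fun t : ℝ => (((c * (t / (2*(m+1)) * besI (m+1) t)) : ℝ) : ℂ)) t) t :=
      ((besI_hasDerivAt m t).const_mul c).ofReal_comp
    have hkey := raylD_apply_imag (iter_analytic sin_div_analytic m)
      (F' := fun t : ℝ => (((c * (t / (2*(m+1)) * besI (m+1) t)) : ℝ) : ℂ)) ih' ht hF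
    rw [hkey]
    have htne : (t : ℝ) ≠ 0 := ht.ne'
    rw [show -(((c * (t / (2*(m+1)) * besI (m+1) t)) : ℝ) : ℂ) / (t : ℂ)
        = (((-(c * (t / (2*(m+1)) * besI (m+1) t) / t)) : ℝ) : ℂ) by push_cast; ring]
    congr 1
    have hfac : ((m+1).factorial : ℝ) = (m+1) * m.factorial := by
      rw [Nat.factorial_succ]; push_cast; ring
    have hfm : (m.factorial : ℝ) ≠ 0 := by positivity
    rw [hc]
    push_cast [hfac]
    field_simp
    ring

lemma sphH_val (l : ℕ) : ∀ t : ℝ, 0 < t →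
    (raylD^[l] (fun y => Complex.exp (Complex.I * y) / y)) (Complex.I * t)
      = -Complex.I * ((Real.exp (-t) * (hP l).eval t⁻¹ : ℝ) : ℂ) := by
  induction l with
  | zero =>
    intro t ht
    have htne : (t:ℝ) ≠ 0 := ht.ne'
    have hIt : (Complex.I * (t:ℂ)) ≠ 0 := by
      simp [Complex.I_ne_zero, Complex.ofReal_ne_zero.mpr htne]
    simp only [Function.iterate_zero, id_eq]
    rw [show Complex.I * (Complex.I * (t:ℂ)) = ((-t : ℝ) : ℂ) by
      rw [← mul_assoc, Complex.I_mul_I]; push_cast; ring]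
    rw [← Complex.ofReal_exp]
    rw [div_eq_iff hIt]
    rw [show (hP 0).eval t⁻¹ = t⁻¹ by simp [hP]]
    push_cast
    have htC : (t:ℂ) ≠ 0 := Complex.ofReal_ne_zero.mpr htne
    have hI2 : (Complex.I : ℂ) * Complex.I = -1 := Complex.I_mul_I
    field_simp [htC]
    ring_nf
    rw [Complex.I_sq]
    ring
  | succ m ih =>
    intro t ht
    have htne : (t:ℝ) ≠ 0 := ht.ne'
    rw [Function.iterate_succ_apply']
    have hexp : HasDerivAt (fun s : ℝ => Real.exp (-s)) (Real.exp (-t) * (-1)) t :=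
      (Real.hasDerivAt_exp (-t)).comp t (hasDerivAt_neg t)
    have hpoly : HasDerivAt (fun s : ℝ => (hP m).eval s⁻¹)
        ((hP m).derivative.eval t⁻¹ * (-(t^2)⁻¹)) t :=
      ((hP m).hasDerivAt t⁻¹).comp t (hasDerivAt_inv htne)
    have hE := hexp.mul hpoly
    have hF : HasDerivAt (fun s : ℝ => -Complex.I * ((Real.exp (-s) * (hP m).eval s⁻¹ : ℝ) : ℂ))
        ((fun t : ℝ => -Complex.I * (((Real.exp (-t) * (-1) * (hP m).eval t⁻¹
          + Real.exp (-t) * ((hP m).derivative.eval t⁻¹ * (-(t^2)⁻¹))) : ℝ) : ℂ)) t) t :=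
      (hE.ofReal_comp).const_mul (-Complex.I)
    have hkey := raylD_apply_imag (iter_analytic exp_div_analytic m)
      (F' := fun t : ℝ => -Complex.I * (((Real.exp (-t) * (-1) * (hP m).eval t⁻¹
          + Real.exp (-t) * ((hP m).derivative.eval t⁻¹ * (-(t^2)⁻¹))) : ℝ) : ℂ))
      (fun s hs => ih s hs) ht hF
    rw [hkey]
    have hev : (hP (m+1)).eval t⁻¹
        = t⁻¹ * (hP m).eval t⁻¹ + (t⁻¹)^3 * ((hP m).derivative.eval t⁻¹) := by
      rw [hP]
      simp [Polynomial.eval_add, Polynomial.eval_mul]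
    rw [hev]
    rw [div_eq_iff (Complex.ofReal_ne_zero.mpr htne)]
    have htC : (t:ℂ) ≠ 0 := Complex.ofReal_ne_zero.mpr htne
    push_cast
    field_simp [htC]
    ring_nf




lemma norm_It {t : ℝ} (ht : 0 < t) : ‖Complex.I * (t:ℂ)‖ = t := by
  simp [abs_of_pos ht]

lemma sphJ_norm (l : ℕ) {t : ℝ} (ht : 0 < t) :
    ‖sphJ l (Complex.I * t)‖ = t^l * ((1 / (2^l * l.factorial)) * besI l t) := by
  have hb := besI_pos l t
  unfold sphJ
  rw [sphJ_val l t ht]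
  simp only [norm_mul, norm_pow, norm_neg, norm_It ht, Complex.norm_real, Real.norm_eq_abs]
  rw [abs_of_pos (by positivity : (0:ℝ) < 1 / (2^l * l.factorial)),
    abs_of_pos hb]
  simp

lemma sphH_norm (l : ℕ) {t : ℝ} (ht : 0 < t) :
    ‖sphH l (Complex.I * t)‖ = t^l * (Real.exp (-t) * (hP l).eval t⁻¹) := by
  have hb := hP_eval_pos l (inv_pos.mpr ht)
  have he := Real.exp_pos (-t)
  unfold sphH
  rw [sphH_val l t ht]
  simp only [norm_mul, norm_neg, Complex.norm_I, norm_pow, one_mul, Complex.norm_real,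
    Real.norm_eq_abs, norm_It ht]
  rw [abs_of_pos he, abs_of_pos hb]

lemma sphJ_ratio (l : ℕ) {t : ℝ} (ht : 0 < t) :
    ‖sphJ (l+1) (Complex.I * t)‖ ≤ (t/(2*(l+1))) * ‖sphJ l (Complex.I * t)‖ := by
  rw [sphJ_norm (l+1) ht, sphJ_norm l ht]
  have hfac : ((l+1).factorial : ℝ) = (l+1) * l.factorial := by
    rw [Nat.factorial_succ]; push_cast; ring
  have hfm : (l.factorial : ℝ) ≠ 0 := by positivity
  have hc : (0:ℝ) ≤ t/(2*(l+1)) * (t^l * (1/(2^l * l.factorial))) := by positivity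
  calc t^(l+1) * ((1 / (2^(l+1) * ((l+1).factorial : ℝ))) * besI (l+1) t)
      = (t/(2*(l+1)) * (t^l * (1/(2^l * l.factorial)))) * besI (l+1) t := by
        rw [hfac]; field_simp; ring
    _ ≤ (t/(2*(l+1)) * (t^l * (1/(2^l * l.factorial)))) * besI l t :=
        mul_le_mul_of_nonneg_left (besI_mono l t) hc
    _ = t/(2*(l+1)) * (t^l * (1/(2^l * l.factorial) * besI l t)) := by ring

lemma hP_eval_succ (l : ℕ) (u : ℝ) :
    (hP (l+1)).eval u = u * (hP l).eval u + u^3 * ((hP l).derivative.eval u) := by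
  rw [hP]; simp [Polynomial.eval_add, Polynomial.eval_mul]

lemma sphH_ratio (l : ℕ) {t : ℝ} (ht : 0 < t) :
    ‖sphH (l+1) (Complex.I * t)‖ ≤ (1 + (2*l+1)/t) * ‖sphH l (Complex.I * t)‖ := by
  rw [sphH_norm (l+1) ht, sphH_norm l ht]
  have htne : t ≠ 0 := ht.ne'
  have hu0 : (0:ℝ) ≤ t⁻¹ := inv_nonneg.mpr ht.le
  have hkey := hP_deriv_eval_le l hu0
  have h3 : t⁻¹ * (t⁻¹ * ((hP l).derivative.eval t⁻¹)) ≤ t⁻¹ * ((2*l+1) * (hP l).eval t⁻¹) :=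
    mul_le_mul_of_nonneg_left hkey hu0
  have h2 : t * ((hP (l+1)).eval t⁻¹) ≤ (1 + (2*l+1)/t) * (hP l).eval t⁻¹ := by
    rw [hP_eval_succ]
    have e1 : t * (t⁻¹ * (hP l).eval t⁻¹ + (t⁻¹)^3 * ((hP l).derivative.eval t⁻¹))
        = (hP l).eval t⁻¹ + t⁻¹ * (t⁻¹ * ((hP l).derivative.eval t⁻¹)) := by
      field_simp
    rw [e1, div_eq_mul_inv]
    nlinarith [h3]
  have hpos : (0:ℝ) ≤ t^l * Real.exp (-t) := by positivity
  calc t^(l+1) * (Real.exp (-t) * ((hP (l+1)).eval t⁻¹))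
      = (t^l * Real.exp (-t)) * (t * ((hP (l+1)).eval t⁻¹)) := by rw [pow_succ]; ring
    _ ≤ (t^l * Real.exp (-t)) * ((1 + (2*l+1)/t) * (hP l).eval t⁻¹) :=
        mul_le_mul_of_nonneg_left h2 hpos
    _ = (1 + (2*l+1)/t) * (t^l * (Real.exp (-t) * (hP l).eval t⁻¹)) := by ring

lemma hasDerivAt_sph {f : ℂ → ℂ} (hf : AnalyticOnNhd ℂ f {x : ℂ | x ≠ 0}) (l : ℕ)
    {z : ℂ} (hz : z ≠ 0) :
    HasDerivAt (fun x => (-x)^l * (raylD^[l] f) x)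
      (((l:ℂ)/z) * ((-z)^l * (raylD^[l] f) z) - (-z)^(l+1) * (raylD^[l+1] f) z) z := by
  have hg : AnalyticAt ℂ (raylD^[l] f) z := iter_analytic hf l z hz
  have hd : HasDerivAt (raylD^[l] f) (deriv (raylD^[l] f) z) z := hg.differentiableAt.hasDerivAt
  have hpow : HasDerivAt (fun x : ℂ => (-x)^l) ((l:ℂ) * (-z)^(l-1) * (-1)) z :=
    (hasDerivAt_neg z).pow l
  have hmul := hpow.mul hd
  refine hmul.congr_deriv ?_
  symm
  rw [Function.iterate_succ_apply']
  show ((l:ℂ)/z) * ((-z)^l * (raylD^[l] f) z) - (-z)^(l+1) * (deriv (raylD^[l] f) z / z) = _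
  have hnz : (-z) ≠ 0 := neg_ne_zero.mpr hz
  have h1 : (l:ℂ) * (-z)^(l-1) * (-1) = ((l:ℂ)/z) * (-z)^l := by
    cases l with
    | zero => simp
    | succ n =>
      rw [show n+1-1 = n from rfl, pow_succ]
      field_simp
  have h2 : (-z)^(l+1) * (deriv (raylD^[l] f) z / z) = -((-z)^l * deriv (raylD^[l] f) z) := by
    rw [pow_succ]
    field_simp
  rw [h1, h2]
  ring

set_option maxHeartbeats 1000000 in
/-- on any compact interval `[d̲, d̄] ⊂ (0, ∞)` there is a constant
`C > 0`, independent of `ℓ`, with `|d/dr j_ℓ(ikr)| ≤ C (ℓ+1) |j_ℓ(ikr)|` and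
`|d/dr h_ℓ(ikr)| ≤ C (ℓ+1) |h_ℓ(ikr)|` for all `ℓ ≥ 1`. -/
theorem stmt_10 (k dlo dhi : ℝ) (hk : 0 < k) (hdlo : 0 < dlo) (hd : dlo < dhi) :
    ∃ C : ℝ, 0 < C ∧
      ∀ l : ℕ, 1 ≤ l → ∀ r ∈ Icc dlo dhi,
        ‖deriv (fun s : ℝ => sphJ l (Complex.I * k * s)) r‖
            ≤ C * (l + 1) * ‖sphJ l (Complex.I * k * r)‖ ∧
        ‖deriv (fun s : ℝ => sphH l (Complex.I * k * s)) r‖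
            ≤ C * (l + 1) * ‖sphH l (Complex.I * k * r)‖ := by
  have hdhi : 0 < dhi := lt_trans hdlo hd
  refine ⟨1/dlo + k^2*dhi/2 + k + 3/dlo + 1, by positivity, ?_⟩
  intro l hl r hr
  set C : ℝ := 1/dlo + k^2*dhi/2 + k + 3/dlo + 1 with hCdef
  have hr0 : 0 < r := lt_of_lt_of_le hdlo hr.1
  set t : ℝ := k * r with htdef
  have ht : 0 < t := mul_pos hk hr0
  have htlo : k * dlo ≤ t := by
    rw [htdef]; exact mul_le_mul_of_nonneg_left hr.1 hk.le
  have hthi : t ≤ k * dhi := by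
    rw [htdef]; exact mul_le_mul_of_nonneg_left hr.2 hk.le
  have hzeq : Complex.I * (k:ℂ) * (r:ℂ) = Complex.I * ((t:ℝ):ℂ) := by
    rw [htdef]; push_cast; ring
  have hz' : Complex.I * ((t:ℝ):ℂ) ≠ 0 :=
    mul_ne_zero Complex.I_ne_zero (Complex.ofReal_ne_zero.mpr ht.ne')
  have hz : Complex.I * (k:ℂ) * (r:ℂ) ≠ 0 := by rw [hzeq]; exact hz'
  have hl0 : (0:ℝ) ≤ (l:ℝ) := Nat.cast_nonneg l
  have hnormc : ‖Complex.I * (k:ℂ)‖ = k := by simp [abs_of_pos hk]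
  have hlz : ‖(l:ℂ)/(Complex.I * ((t:ℝ):ℂ))‖ = (l:ℝ) / t := by
    rw [norm_div, norm_It ht]
    norm_num
  -- scalar bounds
  have e1 : k * ((l:ℝ)/t) ≤ (l:ℝ) * (1/dlo) := by
    have h1 : k * ((l:ℝ)/t) ≤ (l:ℝ)/dlo := by
      rw [mul_div_assoc', div_le_div_iff₀ ht hdlo]
      nlinarith [mul_le_mul_of_nonneg_left htlo hl0]
    calc k * ((l:ℝ)/t) ≤ (l:ℝ)/dlo := h1
      _ = (l:ℝ) * (1/dlo) := by ring
  have e2 : t/(2*((l:ℝ)+1)) ≤ k*dhi/2 := by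
    apply div_le_div₀ (by positivity) hthi (by norm_num)
    nlinarith
  have e3 : k * ((2*(l:ℝ)+1)/t) ≤ (2*(l:ℝ)+1) * (1/dlo) := by
    have h1 : k * ((2*(l:ℝ)+1)/t) ≤ (2*(l:ℝ)+1)/dlo := by
      rw [mul_div_assoc', div_le_div_iff₀ ht hdlo]
      nlinarith [mul_le_mul_of_nonneg_left htlo (by positivity : (0:ℝ) ≤ 2*(l:ℝ)+1)]
    calc k * ((2*(l:ℝ)+1)/t) ≤ (2*(l:ℝ)+1)/dlo := h1
      _ = (2*(l:ℝ)+1) * (1/dlo) := by ring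
  have hns : (0:ℝ) ≤ k^2*dhi/2 := by positivity
  have hns2 : (0:ℝ) ≤ 3/dlo := by positivity
  have hns3 : (0:ℝ) ≤ 1/dlo := by positivity
  have hC1 : (1:ℝ)/dlo ≤ C := by rw [hCdef]; linarith
  have hC2 : k*(k*dhi/2) ≤ C := by
    have e : k*(k*dhi/2) = k^2*dhi/2 := by ring
    rw [hCdef, e]; linarith
  have hC3 : 3*((1:ℝ)/dlo) ≤ C := by
    have e : (3:ℝ)*(1/dlo) = 3/dlo := by ring
    rw [hCdef, e]; linarith
  have hCk1 : k + (1:ℝ)/dlo ≤ C := by rw [hCdef]; linarith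
  constructor
  · -- J part
    have h1 : HasDerivAt (sphJ l)
        (((l:ℂ)/(Complex.I * (k:ℂ) * (r:ℂ))) * sphJ l (Complex.I * (k:ℂ) * (r:ℂ))
          - sphJ (l+1) (Complex.I * (k:ℂ) * (r:ℂ))) (Complex.I * (k:ℂ) * (r:ℂ)) :=
      hasDerivAt_sph sin_div_analytic l hz
    have hD := hasDerivAt_comp_ray (c := Complex.I * (k:ℂ)) h1
    rw [hD.deriv, hzeq]
    have hRJ := sphJ_ratio l ht
    set X : ℝ := ‖sphJ l (Complex.I * ((t:ℝ):ℂ))‖ with hXdef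
    have hX : (0:ℝ) ≤ X := norm_nonneg _
    have m1 : k * (((l:ℝ)/t) * X) ≤ ((l:ℝ) * (1/dlo)) * X := by
      have := mul_le_mul_of_nonneg_right e1 hX
      calc k * (((l:ℝ)/t) * X) = (k * ((l:ℝ)/t)) * X := by ring
        _ ≤ ((l:ℝ) * (1/dlo)) * X := this
    have m2 : k * ((t/(2*((l:ℝ)+1))) * X) ≤ (k*(k*dhi/2)) * X := by
      have h := mul_le_mul_of_nonneg_right e2 hX
      have h2 := mul_le_mul_of_nonneg_left h hk.le
      calc k * ((t/(2*((l:ℝ)+1))) * X) = k * ((t/(2*((l:ℝ)+1))) * X) := rfl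
        _ ≤ k * ((k*dhi/2) * X) := h2
        _ = (k*(k*dhi/2)) * X := by ring
    have hMl : ((l:ℝ) * (1/dlo)) * X ≤ ((l:ℝ) * C) * X :=
      mul_le_mul_of_nonneg_right (mul_le_mul_of_nonneg_left hC1 hl0) hX
    have hc2X : (k*(k*dhi/2)) * X ≤ C * X := mul_le_mul_of_nonneg_right hC2 hX
    calc ‖Complex.I * (k:ℂ) * (((l:ℂ)/(Complex.I * ((t:ℝ):ℂ))) * sphJ l (Complex.I * ((t:ℝ):ℂ))
            - sphJ (l+1) (Complex.I * ((t:ℝ):ℂ)))‖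
        = k * ‖((l:ℂ)/(Complex.I * ((t:ℝ):ℂ))) * sphJ l (Complex.I * ((t:ℝ):ℂ))
            - sphJ (l+1) (Complex.I * ((t:ℝ):ℂ))‖ := by rw [norm_mul, hnormc]
      _ ≤ k * (((l:ℝ)/t) * X + ‖sphJ (l+1) (Complex.I * ((t:ℝ):ℂ))‖) := by
          apply mul_le_mul_of_nonneg_left _ hk.le
          refine (norm_sub_le _ _).trans ?_
          rw [norm_mul, hlz]
      _ ≤ k * (((l:ℝ)/t) * X + t/(2*((l:ℝ)+1)) * X) := by
          apply mul_le_mul_of_nonneg_left _ hk.le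
          exact add_le_add_right hRJ _
      _ = k * (((l:ℝ)/t) * X) + k * ((t/(2*((l:ℝ)+1))) * X) := by ring
      _ ≤ ((l:ℝ) * C) * X + C * X := add_le_add (m1.trans hMl) (m2.trans hc2X)
      _ = C * ((l:ℝ) + 1) * X := by ring
  · -- H part
    have h1 := (hasDerivAt_sph exp_div_analytic l hz).const_mul (-Complex.I)
    have h1' : HasDerivAt (sphH l)
        (-Complex.I * (((l:ℂ)/(Complex.I * (k:ℂ) * (r:ℂ)))
          * ((-(Complex.I * (k:ℂ) * (r:ℂ)))^l
            * (raylD^[l] (fun y => Complex.exp (Complex.I * y) / y)) (Complex.I * (k:ℂ) * (r:ℂ)))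
          - (-(Complex.I * (k:ℂ) * (r:ℂ)))^(l+1)
            * (raylD^[l+1] (fun y => Complex.exp (Complex.I * y) / y))
              (Complex.I * (k:ℂ) * (r:ℂ)))) (Complex.I * (k:ℂ) * (r:ℂ)) := h1
    have hD := hasDerivAt_comp_ray (c := Complex.I * (k:ℂ)) h1'
    rw [hD.deriv, hzeq]
    have hRH := sphH_ratio l ht
    set X : ℝ := ‖sphH l (Complex.I * ((t:ℝ):ℂ))‖ with hXdef
    have hX : (0:ℝ) ≤ X := norm_nonneg _
    have hnormA : ‖(-(Complex.I * ((t:ℝ):ℂ)))^l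
        * (raylD^[l] (fun y => Complex.exp (Complex.I * y) / y)) (Complex.I * ((t:ℝ):ℂ))‖
        = X := by
      rw [hXdef]
      simp [sphH, norm_mul]
    have hnormB : ‖(-(Complex.I * ((t:ℝ):ℂ)))^(l+1)
        * (raylD^[l+1] (fun y => Complex.exp (Complex.I * y) / y)) (Complex.I * ((t:ℝ):ℂ))‖
        = ‖sphH (l+1) (Complex.I * ((t:ℝ):ℂ))‖ := by
      simp [sphH, norm_mul]
    have m1 : k * (((l:ℝ)/t) * X) ≤ ((l:ℝ) * (1/dlo)) * X := by
      have := mul_le_mul_of_nonneg_right e1 hX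
      calc k * (((l:ℝ)/t) * X) = (k * ((l:ℝ)/t)) * X := by ring
        _ ≤ ((l:ℝ) * (1/dlo)) * X := this
    have m3 : k * ((((2*(l:ℝ)+1))/t) * X) ≤ ((2*(l:ℝ)+1) * (1/dlo)) * X := by
      have := mul_le_mul_of_nonneg_right e3 hX
      calc k * ((((2*(l:ℝ)+1))/t) * X) = (k * ((2*(l:ℝ)+1)/t)) * X := by ring
        _ ≤ ((2*(l:ℝ)+1) * (1/dlo)) * X := this
    have hsc : (l:ℝ)*(1/dlo) + k + (2*(l:ℝ)+1)*(1/dlo) ≤ C*((l:ℝ)+1) := by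
      have h3l : (l:ℝ)*(3*((1:ℝ)/dlo)) ≤ (l:ℝ)*C := mul_le_mul_of_nonneg_left hC3 hl0
      nlinarith [h3l, hCk1]
    calc ‖Complex.I * (k:ℂ) * (-Complex.I * (((l:ℂ)/(Complex.I * ((t:ℝ):ℂ)))
          * ((-(Complex.I * ((t:ℝ):ℂ)))^l
            * (raylD^[l] (fun y => Complex.exp (Complex.I * y) / y)) (Complex.I * ((t:ℝ):ℂ)))
          - (-(Complex.I * ((t:ℝ):ℂ)))^(l+1)
            * (raylD^[l+1] (fun y => Complex.exp (Complex.I * y) / y))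
              (Complex.I * ((t:ℝ):ℂ))))‖
        = k * ‖((l:ℂ)/(Complex.I * ((t:ℝ):ℂ)))
          * ((-(Complex.I * ((t:ℝ):ℂ)))^l
            * (raylD^[l] (fun y => Complex.exp (Complex.I * y) / y)) (Complex.I * ((t:ℝ):ℂ)))
          - (-(Complex.I * ((t:ℝ):ℂ)))^(l+1)
            * (raylD^[l+1] (fun y => Complex.exp (Complex.I * y) / y))
              (Complex.I * ((t:ℝ):ℂ))‖ := by
          rw [norm_mul, hnormc, norm_mul]
          simp
      _ ≤ k * (((l:ℝ)/t) * X + ‖sphH (l+1) (Complex.I * ((t:ℝ):ℂ))‖) := by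
          apply mul_le_mul_of_nonneg_left _ hk.le
          refine (norm_sub_le _ _).trans ?_
          rw [norm_mul, hlz, hnormA, hnormB]
      _ ≤ k * (((l:ℝ)/t) * X + (1 + (2*(l:ℝ)+1)/t) * X) := by
          apply mul_le_mul_of_nonneg_left _ hk.le
          exact add_le_add_right hRH _
      _ = k * (((l:ℝ)/t) * X) + (k * X + k * ((((2*(l:ℝ)+1))/t) * X)) := by ring
      _ ≤ ((l:ℝ) * (1/dlo)) * X + (k * X + ((2*(l:ℝ)+1) * (1/dlo)) * X) :=
          add_le_add m1 (add_le_add (le_refl _) m3)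
      _ = ((l:ℝ)*(1/dlo) + k + (2*(l:ℝ)+1)*(1/dlo)) * X := by ring
      _ ≤ (C*((l:ℝ)+1)) * X := mul_le_mul_of_nonneg_right hsc hX
      _ = C * ((l:ℝ) + 1) * X := by ring
end

section
/- For every ℓ ∈ ℕ, k > 0 and r > 0: h_ℓ(ikr) = (−i)^{ℓ+2} · (1/(kr e^{kr})) · Σ_{n=0}^{ℓ} (1/(n! (2kr)^n)) · (ℓ+n)!/(ℓ−n)!. -/
open Complex MeasureTheory Set

noncomputable def bb15 (l n : ℕ) : ℂ :=
  if n ≤ l then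
    ((l + n).factorial : ℂ) / (2 ^ n * (n.factorial : ℂ) * ((l - n).factorial : ℂ))
  else 0

noncomputable def aa15 (l n : ℕ) : ℂ := Complex.I ^ (l + n) * bb15 l n

lemma aa_zero_s15 (l : ℕ) : aa15 (l + 1) 0 = Complex.I * aa15 l 0 := by
  unfold aa15 bb15
  simp only [Nat.zero_le, if_pos, Nat.add_zero, Nat.sub_zero, Nat.factorial_zero, Nat.cast_one,
    pow_zero, one_mul, mul_one]
  rw [div_self (Nat.cast_ne_zero.2 (l+1).factorial_ne_zero),
    div_self (Nat.cast_ne_zero.2 l.factorial_ne_zero), pow_succ]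
  ring

lemma aa_top (l : ℕ) : aa15 l (l + 1) = 0 := by
  simp [aa15, bb15]

lemma bb_rec (l n : ℕ) :
    bb15 (l + 1) (n + 1) = bb15 l (n + 1) + ((l + n + 1 : ℕ) : ℂ) * bb15 l n := by
  rcases lt_trichotomy n l with h | rfl | h
  · obtain ⟨m, rfl⟩ : ∃ m, l = n + 1 + m := ⟨l - (n+1), by omega⟩
    have h1 : n + 1 ≤ n + 1 + m + 1 := by omega
    have h2 : n + 1 ≤ n + 1 + m := by omega
    have h3 : n ≤ n + 1 + m := by omega
    simp only [bb15, if_pos h1, if_pos h2, if_pos h3]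
    have e1 : n + 1 + m + 1 - (n + 1) = m + 1 := by omega
    have e2 : n + 1 + m - (n + 1) = m := by omega
    have e3 : n + 1 + m - n = m + 1 := by omega
    have e4 : n + 1 + m + 1 + (n + 1) = (n + 1 + m + n) + 2 := by omega
    have e5 : n + 1 + m + (n + 1) = (n + 1 + m + n) + 1 := by omega
    rw [e1, e2, e3, e4, e5]
    have hfac2 : (((n+1+m+n) + 2).factorial : ℂ)
        = ((n:ℂ)+1+m+n+2) * (((n:ℂ)+1+m+n+1) * ((n+1+m+n).factorial : ℂ)) := by
      push_cast [Nat.factorial_succ]; ring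
    have hfac1 : (((n+1+m+n) + 1).factorial : ℂ) = ((n:ℂ)+1+m+n+1) * ((n+1+m+n).factorial : ℂ) := by
      push_cast [Nat.factorial_succ]; ring
    have hfacn : ((n+1).factorial : ℂ) = ((n:ℂ)+1) * (n.factorial : ℂ) := by
      push_cast [Nat.factorial_succ]; ring
    have hfacm : ((m+1).factorial : ℂ) = ((m:ℂ)+1) * (m.factorial : ℂ) := by
      push_cast [Nat.factorial_succ]; ring
    rw [hfac2, hfac1, hfacn, hfacm]
    have hfn : (n.factorial : ℂ) ≠ 0 := Nat.cast_ne_zero.2 n.factorial_ne_zero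
    have hfm : (m.factorial : ℂ) ≠ 0 := Nat.cast_ne_zero.2 m.factorial_ne_zero
    have h2n : (2 : ℂ) ^ n ≠ 0 := pow_ne_zero _ two_ne_zero
    have hn1 : ((n : ℂ) + 1) ≠ 0 := by exact_mod_cast Nat.succ_ne_zero n
    have hm1 : ((m : ℂ) + 1) ≠ 0 := by exact_mod_cast Nat.succ_ne_zero m
    have hd1 : (2:ℂ) ^ (n+1) * (((n:ℂ)+1) * (n.factorial:ℂ)) * (((m:ℂ)+1) * (m.factorial:ℂ)) ≠ 0 := by
      apply mul_ne_zero (mul_ne_zero (pow_ne_zero _ two_ne_zero) (mul_ne_zero hn1 hfn))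
      exact mul_ne_zero hm1 hfm
    have hd2 : (2:ℂ) ^ (n+1) * (((n:ℂ)+1) * (n.factorial:ℂ)) * (m.factorial:ℂ) ≠ 0 := by
      exact mul_ne_zero (mul_ne_zero (pow_ne_zero _ two_ne_zero) (mul_ne_zero hn1 hfn)) hfm
    have hd3 : (2:ℂ) ^ n * (n.factorial:ℂ) * (((m:ℂ)+1) * (m.factorial:ℂ)) ≠ 0 := by
      exact mul_ne_zero (mul_ne_zero h2n hfn) (mul_ne_zero hm1 hfm)
    rw [mul_div_assoc', div_add_div _ _ hd2 hd3, div_eq_div_iff hd1 (mul_ne_zero hd2 hd3)]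
    push_cast
    ring
  · have h1 : n + 1 ≤ n + 1 := le_refl _
    have h2 : ¬ (n + 1 ≤ n) := by omega
    simp only [bb15, if_pos h1, if_neg h2, if_pos (le_refl n)]
    have e1 : n + 1 - (n + 1) = 0 := by omega
    have e2 : n - n = 0 := by omega
    have e4 : n + 1 + (n + 1) = (n + n) + 2 := by omega
    have e5 : n + n + 1 = (n + n) + 1 := by omega
    rw [e1, e2, e4]
    have hfac2 : (((n+n) + 2).factorial : ℂ)
        = ((n:ℂ)+n+2) * (((n:ℂ)+n+1) * ((n+n).factorial : ℂ)) := by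
      push_cast [Nat.factorial_succ]; ring
    have hfacn : ((n+1).factorial : ℂ) = ((n:ℂ)+1) * (n.factorial : ℂ) := by
      push_cast [Nat.factorial_succ]; ring
    rw [hfac2, hfacn]
    have hfn : (n.factorial : ℂ) ≠ 0 := Nat.cast_ne_zero.2 n.factorial_ne_zero
    have h2n : (2 : ℂ) ^ n ≠ 0 := pow_ne_zero _ two_ne_zero
    have hn1 : ((n : ℂ) + 1) ≠ 0 := by exact_mod_cast Nat.succ_ne_zero n
    simp only [Nat.factorial_zero, Nat.cast_one, mul_one]
    have hd1 : (2:ℂ) ^ (n+1) * (((n:ℂ)+1) * (n.factorial:ℂ)) ≠ 0 :=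
      mul_ne_zero (pow_ne_zero _ two_ne_zero) (mul_ne_zero hn1 hfn)
    have hd3 : (2:ℂ) ^ n * (n.factorial:ℂ) ≠ 0 := mul_ne_zero h2n hfn
    rw [zero_add, mul_div_assoc', div_eq_div_iff hd1 hd3]
    push_cast [pow_succ]
    ring
  · have h1 : ¬ (n + 1 ≤ l + 1) := by omega
    have h2 : ¬ (n + 1 ≤ l) := by omega
    have h3 : ¬ (n ≤ l) := by omega
    simp [bb15, h1, h2, h3]

lemma aa_rec (l n : ℕ) :
    aa15 (l + 1) (n + 1) = Complex.I * aa15 l (n + 1) - ((l + n + 1 : ℕ) : ℂ) * aa15 l n := by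
  unfold aa15
  rw [bb_rec]
  have p2 : (Complex.I : ℂ) ^ (l + 1 + (n + 1)) = -Complex.I ^ (l + n) := by
    rw [show l + 1 + (n + 1) = (l + n) + 1 + 1 by ring, pow_succ, pow_succ, mul_assoc,
      Complex.I_mul_I, mul_neg_one]
  have p1 : (Complex.I : ℂ) ^ (l + (n + 1)) = Complex.I ^ (l + n) * Complex.I := by
    rw [show l + (n + 1) = (l + n) + 1 by ring, pow_succ]
  rw [p2, p1]
  linear_combination (-(Complex.I ^ (l + n) * bb15 l (n + 1))) * Complex.I_mul_I

lemma sum_id15 (l : ℕ) (x : ℂ) (hx : x ≠ 0) :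
    Complex.I * ∑ n ∈ Finset.range (l+1), aa15 l n * x ^ (-((l+n+1:ℕ):ℤ))
      + ∑ n ∈ Finset.range (l+1),
          aa15 l n * (((-((l+n+1:ℕ):ℤ)) : ℂ) * x ^ ((-((l+n+1:ℕ):ℤ)) - 1))
    = (∑ n ∈ Finset.range (l+1+1), aa15 (l+1) n * x ^ (-((l+1+n+1:ℕ):ℤ))) * x := by
  have hrhs : (∑ n ∈ Finset.range (l+1+1), aa15 (l+1) n * x ^ (-((l+1+n+1:ℕ):ℤ))) * x
      = ∑ n ∈ Finset.range (l+2), aa15 (l+1) n * x ^ (-((l+n+1:ℕ):ℤ)) := by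
    rw [Finset.sum_mul]
    refine Finset.sum_congr rfl fun n _ => ?_
    rw [mul_assoc, ← zpow_add_one₀ hx]
    congr 2
    push_cast; ring
  rw [hrhs, Finset.sum_range_succ' _ (l+1)]
  -- RHS now: ∑ n<l+1, aa15 (l+1) (n+1) * x^(-(l+n+2)) + aa15 (l+1) 0 * x^(-(l+1))
  have e0 : ∀ n : ℕ, l + (n+1) + 1 = l + n + 2 := fun n => by omega
  simp only [e0, aa_rec, aa_zero_s15, Nat.add_zero]
  rw [Finset.sum_range_succ' (fun n => aa15 l n * x ^ (-((l+n+1:ℕ):ℤ))) l]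
  have h1 : ∑ k ∈ Finset.range l, aa15 l (k+1) * x ^ (-((l+(k+1)+1:ℕ):ℤ))
      = ∑ k ∈ Finset.range (l+1), aa15 l (k+1) * x ^ (-((l+k+2:ℕ):ℤ)) := by
    rw [Finset.sum_range_succ, aa_top, zero_mul, add_zero]
    exact Finset.sum_congr rfl fun k _ => by rw [show l+(k+1)+1 = l+k+2 by omega]
  have h2 : ∀ n : ℕ, (-((l+n+1:ℕ):ℤ)) - 1 = -((l+n+2:ℕ):ℤ) := by
    intro n; push_cast; ring
  rw [h1]
  simp only [h2, Nat.add_zero]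
  push_cast
  simp only [mul_add, Finset.mul_sum, sub_mul, Finset.sum_sub_distrib, mul_neg, neg_mul,
    Finset.sum_neg_distrib, mul_comm, mul_left_comm, mul_assoc]
  rw [add_right_comm, ← sub_eq_add_neg, ← Finset.sum_sub_distrib]
  congr 1
  exact Finset.sum_congr rfl fun n _ => by ring

lemma key15 (l : ℕ) (x : ℂ) (hx : x ≠ 0) :
    (raylD^[l] (fun y => Complex.exp (Complex.I * y) / y)) x
      = Complex.exp (Complex.I * x)
          * ∑ n ∈ Finset.range (l+1), aa15 l n * x ^ (-((l+n+1:ℕ):ℤ)) := by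
  induction l generalizing x with
  | zero =>
    simp only [Function.iterate_zero_apply, zero_add, Finset.range_one, Finset.sum_singleton]
    have : aa15 0 0 = 1 := by simp [aa15, bb15]
    rw [this, one_mul]
    simp [zpow_neg, div_eq_mul_inv]
  | succ l ih =>
    rw [Function.iterate_succ_apply']
    show deriv (raylD^[l] fun y => Complex.exp (Complex.I * y) / y) x / x = _
    have hev : (raylD^[l] (fun y => Complex.exp (Complex.I * y) / y))
        =ᶠ[nhds x] fun y => Complex.exp (Complex.I * y)
          * ∑ n ∈ Finset.range (l+1), aa15 l n * y ^ (-((l+n+1:ℕ):ℤ)) := by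
      filter_upwards [compl_singleton_mem_nhds hx] with y hy using ih y hy
    rw [hev.deriv_eq]
    have hexp : HasDerivAt (fun y : ℂ => Complex.exp (Complex.I * y))
        (Complex.exp (Complex.I * x) * Complex.I) x :=
      HasDerivAt.cexp (by simpa using (hasDerivAt_id x).const_mul Complex.I)
    have hsum : HasDerivAt
        (fun y : ℂ => ∑ n ∈ Finset.range (l+1), aa15 l n * y ^ (-((l+n+1:ℕ):ℤ)))
        (∑ n ∈ Finset.range (l+1),
          aa15 l n * (((-((l+n+1:ℕ):ℤ)) : ℂ) * x ^ ((-((l+n+1:ℕ):ℤ)) - 1))) x := by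
      refine HasDerivAt.fun_sum fun n _ => ?_
      have h := (hasDerivAt_zpow (-((l+n+1:ℕ):ℤ)) x (Or.inl hx)).const_mul (aa15 l n)
      push_cast at h ⊢
      exact h
    rw [(hexp.fun_mul hsum).deriv, div_eq_iff hx]
    rw [mul_assoc (Complex.exp (Complex.I * x)) Complex.I, ← mul_add, mul_assoc]
    exact congrArg _ (sum_id15 l x hx)

/-- the closed form
`h_ℓ(ikr) = (−i)^{ℓ+2} (1/(kr e^{kr})) Σ_{n=0}^{ℓ} (1/(n!(2kr)^n)) (ℓ+n)!/(ℓ−n)!`. -/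
theorem stmt_15 (l : ℕ) (k r : ℝ) (hk : 0 < k) (hr : 0 < r) :
    sphH l (Complex.I * k * r)
      = (-Complex.I) ^ (l + 2) * (1 / ((k : ℂ) * r * Real.exp (k * r))) *
          ∑ n ∈ Finset.range (l + 1),
            (1 / ((n.factorial : ℂ) * (2 * (k : ℂ) * r) ^ n)) *
              (((l + n).factorial : ℂ) / ((l - n).factorial : ℂ)) := by
  have hkc : ((k:ℂ)) ≠ 0 := Complex.ofReal_ne_zero.2 hk.ne'
  have hrc : ((r:ℂ)) ≠ 0 := Complex.ofReal_ne_zero.2 hr.ne'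
  have ht : ((k:ℂ) * r) ≠ 0 := mul_ne_zero hkc hrc
  have hx : Complex.I * k * r ≠ 0 :=
    mul_ne_zero (mul_ne_zero Complex.I_ne_zero hkc) hrc
  have hE : ((Real.exp (k * r) : ℝ) : ℂ) ≠ 0 :=
    Complex.ofReal_ne_zero.2 (Real.exp_pos _).ne'
  have hexp : Complex.exp (Complex.I * (Complex.I * k * r)) = ((Real.exp (k * r) : ℝ) : ℂ)⁻¹ := by
    rw [show Complex.I * (Complex.I * (k:ℂ) * r) = -((k:ℂ) * r) by
      rw [show Complex.I * (Complex.I * (k:ℂ) * r) = (Complex.I * Complex.I) * ((k:ℂ) * r) by ring,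
        Complex.I_mul_I]; ring]
    rw [Complex.exp_neg]
    rw [Complex.ofReal_exp, Complex.ofReal_mul]
  unfold sphH
  rw [key15 l _ hx, hexp]
  have lhs_eq : ∀ (c d e : ℂ) (f : ℕ → ℂ),
      c * (d * (e * ∑ n ∈ Finset.range (l+1), f n))
        = ∑ n ∈ Finset.range (l+1), c * d * e * f n := by
    intro c d e f
    rw [Finset.mul_sum, Finset.mul_sum, Finset.mul_sum]
    exact Finset.sum_congr rfl fun n _ => by ring
  have rhs_eq : ∀ (c d : ℂ) (f : ℕ → ℂ),
      c * d * ∑ n ∈ Finset.range (l+1), f n = ∑ n ∈ Finset.range (l+1), c * d * f n := by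
    intro c d f
    rw [Finset.mul_sum]
  rw [lhs_eq, rhs_eq]
  refine Finset.sum_congr rfl fun n hn => ?_
  have hn' : n ≤ l := Finset.mem_range_succ_iff.mp hn
  have hfn : (n.factorial : ℂ) ≠ 0 := Nat.cast_ne_zero.2 n.factorial_ne_zero
  have hfln : ((l - n).factorial : ℂ) ≠ 0 := Nat.cast_ne_zero.2 (l - n).factorial_ne_zero
  rw [aa15, bb15, if_pos hn']
  have hsplit : (Complex.I * (k:ℂ) * r) ^ (-((l+n+1:ℕ):ℤ))
      = Complex.I ^ (-((l+n+1:ℕ):ℤ)) * ((k:ℂ) * r) ^ (-((l+n+1:ℕ):ℤ)) := by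
    rw [show Complex.I * (k:ℂ) * r = Complex.I * ((k:ℂ) * r) by ring, mul_zpow]
  have hIcancel : Complex.I ^ (l+n) * Complex.I ^ (-((l+n+1:ℕ):ℤ)) = -Complex.I := by
    rw [← zpow_natCast Complex.I (l+n), ← zpow_add₀ Complex.I_ne_zero]
    rw [show ((l+n:ℕ):ℤ) + (-((l+n+1:ℕ):ℤ)) = -1 by push_cast; ring]
    rw [zpow_neg_one, Complex.inv_I]
  have htsplit : ((k:ℂ) * r) ^ (-((l+n+1:ℕ):ℤ)) = (((k:ℂ) * r) ^ (l+n+1))⁻¹ := by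
    rw [zpow_neg, zpow_natCast]
  have hneg : (-(Complex.I * (k:ℂ) * r)) ^ l = (-Complex.I) ^ l * ((k:ℂ) * r) ^ l := by
    rw [show -(Complex.I * (k:ℂ) * r) = (-Complex.I) * ((k:ℂ) * r) by ring, mul_pow]
  rw [hneg]
  have hterm : Complex.I ^ (l+n)
        * (((l+n).factorial : ℂ) / (2 ^ n * (n.factorial : ℂ) * ((l - n).factorial : ℂ)))
        * (Complex.I * (k:ℂ) * r) ^ (-((l+n+1:ℕ):ℤ))
      = -Complex.I * (((l+n).factorial : ℂ) / (2 ^ n * (n.factorial : ℂ) * ((l - n).factorial : ℂ))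
          * (((k:ℂ) * r) ^ (l+n+1))⁻¹) := by
    rw [hsplit, htsplit, ← hIcancel]; ring
  rw [hterm]
  have hcancel : ((k:ℂ)*r)^l * ((((k:ℂ)*r))^(l+n+1))⁻¹ = ((((k:ℂ)*r))^(n+1))⁻¹ := by
    rw [show l+n+1 = l+(n+1) by omega, pow_add, mul_inv, ← mul_assoc,
      mul_inv_cancel₀ (pow_ne_zero _ ht), one_mul]
  rw [show -Complex.I * ((-Complex.I) ^ l * ((k:ℂ) * r) ^ l) * (((Real.exp (k * r) : ℝ) : ℂ))⁻¹
        * (-Complex.I * (((l+n).factorial : ℂ) / (2 ^ n * (n.factorial : ℂ) * ((l - n).factorial : ℂ))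
          * ((((k:ℂ) * r)) ^ (l+n+1))⁻¹))
      = (-Complex.I) ^ l * (-Complex.I) * (-Complex.I) * (((Real.exp (k * r) : ℝ) : ℂ))⁻¹
        * (((l+n).factorial : ℂ) / (2 ^ n * (n.factorial : ℂ) * ((l - n).factorial : ℂ)))
        * (((k:ℂ)*r)^l * ((((k:ℂ)*r))^(l+n+1))⁻¹) by ring, hcancel]
  rw [show (-Complex.I) ^ (l+2) = (-Complex.I) ^ l * (-Complex.I) * (-Complex.I) by ring]
  field_simp
  ring
end
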